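/- arXiv:2512.06745 — 9 statements merged into one kernel-verified Lean document; each statement's English description precedes it below -/
import Mathlib

section
/- Let G : ℝⁿ → ℝ be separately additive (additive in each variable when the others are fixed). If G is bounded on a set U ⊂ ℝⁿ with nonempty interior, then G is separately linear; in particular there exists c ∈ ℝ such that G(x₁,…,xₙ) = c·x₁⋯xₙ for all (x₁,…,xₙ) ∈ ℝⁿ. -/
/-- An additive function `f : ℝ → ℝ` bounded on an interval is linear. -/
lemma additive_bounded_linear' (f : ℝ → ℝ) (hf : ∀ x y, f (x + y) = f x + f y)
    (b δ C : ℝ) (hδ : 0 < δ) (hC : ∀ t, |t - b| ≤ δ → |f t| ≤ C) :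
    ∀ t, f t = f 1 * t := by
  set g : ℝ → ℝ := fun t => f t - f 1 * t with hgdef
  have hgadd : ∀ x y, g (x + y) = g x + g y := by
    intro x y; simp only [hgdef]; rw [hf]; ring
  set F : ℝ →+ ℝ := AddMonoidHom.mk' g hgadd with hF
  have hFg : ∀ t, F t = g t := fun t => rfl
  have hg1 : g 1 = 0 := by simp [hgdef]
  have hq : ∀ q : ℚ, g (q : ℝ) = 0 := by
    intro q
    have h := map_ratCast_smul F ℝ ℝ q (1 : ℝ)
    simp only [smul_eq_mul, mul_one, hFg, hg1, mul_zero] at h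
    exact h
  set C' := C + |f 1| * (|b| + δ) with hC'
  have hgb : ∀ t, |t - b| ≤ δ → |g t| ≤ C' := by
    intro t ht
    have h1 : |t| ≤ |b| + δ := by
      have := abs_sub_abs_le_abs_sub t b
      linarith
    have h2 : |g t| ≤ |f t| + |f 1| * |t| := by
      calc |g t| ≤ |f t| + |f 1 * t| := abs_sub (f t) (f 1 * t)
        _ = |f t| + |f 1| * |t| := by rw [abs_mul]
    have h3 := hC t ht
    have h4 : |f 1| * |t| ≤ |f 1| * (|b| + δ) :=
      mul_le_mul_of_nonneg_left h1 (abs_nonneg _)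
    linarith
  have hglob : ∀ s, |g s| ≤ C' := by
    intro s
    obtain ⟨q, hq1, hq2⟩ := exists_rat_btwn (show s - b - δ < s - b + δ by linarith)
    have he : g s = g (s - q) + g (q : ℝ) := by
      rw [← hgadd]; ring_nf
    rw [he, hq q, add_zero]
    exact hgb _ (by rw [abs_le]; constructor <;> linarith)
  have hzero : ∀ t, g t = 0 := by
    intro t
    by_contra h
    have hpos : 0 < |g t| := abs_pos.mpr h
    obtain ⟨m, hm⟩ := exists_nat_gt (C' / |g t|)
    have hsm : g ((m : ℝ) * t) = (m : ℝ) * g t := by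
      have := map_nsmul F m t
      simpa [hFg, nsmul_eq_mul] using this
    have hb1 : (m : ℝ) * |g t| ≤ C' := by
      have := hglob ((m : ℝ) * t)
      rwa [hsm, abs_mul, abs_of_nonneg (by positivity : (0:ℝ) ≤ (m:ℝ))] at this
    have := (div_lt_iff₀ hpos).mp hm
    linarith
  intro t
  have := hzero t
  simp only [hgdef] at this
  linarith

lemma aux_sep : ∀ (n : ℕ) (G : (Fin n → ℝ) → ℝ),
    (∀ (i : Fin n) (a : Fin n → ℝ) (x y : ℝ),
      G (Function.update a i (x + y)) = G (Function.update a i x) + G (Function.update a i y)) →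
    ∀ (a : Fin n → ℝ) (δ M : ℝ), 0 < δ →
    (∀ u : Fin n → ℝ, (∀ i, |u i - a i| ≤ δ) → |G u| ≤ M) →
    ∀ x, G x = G (fun _ => 1) * ∏ i, x i := by
  intro n
  induction n with
  | zero =>
    intro G _ a δ M _ _ x
    have hx : x = fun _ => 1 := Subsingleton.elim _ _
    simp [hx]
  | succ n ih =>
    intro G hadd a δ M hδ hbdd x
    -- additivity in the first coordinate
    have hAt : ∀ (y : Fin n → ℝ) (s t : ℝ),
        G (Fin.cons (s + t) y) = G (Fin.cons s y) + G (Fin.cons t y) := by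
      intro y s t
      have h := hadd 0 (Fin.cons 0 y) s t
      simpa [Fin.update_cons_zero] using h
    -- sections are separately additive
    have hadd' : ∀ t : ℝ, ∀ (i : Fin n) (p : Fin n → ℝ) (x y : ℝ),
        G (Fin.cons t (Function.update p i (x + y))) =
        G (Fin.cons t (Function.update p i x)) + G (Fin.cons t (Function.update p i y)) := by
      intro t i p x y
      have h := hadd i.succ (Fin.cons t p) x y
      simpa [← Fin.cons_update] using h
    set c : ℝ → ℝ := fun t => G (Fin.cons t (fun _ => 1)) with hc
    -- Step A : near a 0 the section is multilinear by ih
    have stepA : ∀ t : ℝ, |t - a 0| ≤ δ →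
        ∀ y : Fin n → ℝ, G (Fin.cons t y) = c t * ∏ j, y j := by
      intro t ht y
      exact ih (fun y => G (Fin.cons t y)) (hadd' t) (fun j => a j.succ) δ M hδ
        (by
          intro u hu
          apply hbdd
          intro i
          refine Fin.cases ?_ ?_ i
          · simpa using ht
          · intro j; simpa using hu j) y
    -- Step B : extend to all t
    have stepB : ∀ (t : ℝ) (y : Fin n → ℝ), G (Fin.cons t y) = c t * ∏ j, y j := by
      intro t y
      set P := ∏ j, y j with hP
      set h : ℝ → ℝ := fun s => G (Fin.cons s y) - c s * P with hh
      have hhadd : ∀ u v, h (u + v) = h u + h v := by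
        intro u v
        simp only [hh, hc]
        rw [hAt, hAt]; ring
      have hzero : ∀ s, |s - a 0| ≤ δ → h s = 0 := by
        intro s hs
        simp only [hh]
        rw [stepA s hs y]
        ring
      have hlin := additive_bounded_linear' h hhadd (a 0) δ 0 hδ
        (fun s hs => by rw [hzero s hs]; simp)
      have e1 : h 1 * (a 0 + δ) = 0 := by
        rw [← hlin (a 0 + δ)]
        exact hzero _ (by rw [abs_le]; constructor <;> linarith)
      have e2 : h 1 * (a 0 - δ) = 0 := by
        rw [← hlin (a 0 - δ)]
        exact hzero _ (by rw [abs_le]; constructor <;> linarith)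
      have h1 : h 1 = 0 := by
        have hδ' : h 1 * δ = 0 := by ring_nf at e1 e2 ⊢; linarith
        rcases mul_eq_zero.mp hδ' with h' | h'
        · exact h'
        · exact absurd h' (ne_of_gt hδ)
      have := hlin t
      rw [h1, zero_mul] at this
      simp only [hh] at this
      linarith
    -- Step C : c is linear
    have hcadd : ∀ u v, c (u + v) = c u + c v := by
      intro u v; simp only [hc]; exact hAt _ u v
    set y₀ : Fin n → ℝ := fun j => if a j.succ = 0 then δ else a j.succ with hy₀
    have hy₀ne : ∀ j, y₀ j ≠ 0 := by
      intro j
      simp only [hy₀]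
      split
      · exact ne_of_gt hδ
      · assumption
    have hP₀ : (∏ j, y₀ j) ≠ 0 := Finset.prod_ne_zero_iff.mpr (fun j _ => hy₀ne j)
    have hy₀close : ∀ j, |y₀ j - a j.succ| ≤ δ := by
      intro j
      simp only [hy₀]
      split
      · next h => rw [h]; simpa using le_of_eq (abs_of_pos hδ)
      · simpa using hδ.le
    have hcb : ∀ t, |t - a 0| ≤ δ → |c t| ≤ M / |∏ j, y₀ j| := by
      intro t ht
      have hG : |G (Fin.cons t y₀)| ≤ M := by
        apply hbdd
        intro i
        refine Fin.cases ?_ ?_ i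
        · simpa using ht
        · intro j; simpa using hy₀close j
      rw [stepB t y₀, abs_mul] at hG
      rw [le_div_iff₀ (abs_pos.mpr hP₀)]
      exact hG
    have hclin := additive_bounded_linear' c hcadd (a 0) δ (M / |∏ j, y₀ j|) hδ hcb
    -- conclude
    have hx := stepB (x 0) (fun j => x j.succ)
    have hcons : Fin.cons (x 0) (fun j => x j.succ) = x := Fin.cons_self_tail x
    rw [hcons] at hx
    have hone : Fin.cons (1:ℝ) (fun _ : Fin n => (1:ℝ)) = (fun _ => (1:ℝ)) := by
      funext i
      refine Fin.cases ?_ ?_ i <;> simp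
    have hc1 : c 1 = G (fun _ => 1) := by rw [hc]; simp [hone]
    rw [hx, hclin (x 0), hc1, Fin.prod_univ_succ]
    ring

/-- A separately additive function `G : ℝⁿ → ℝ` which is bounded on a set with
nonempty interior is separately linear: `G x = c * ∏ i, x i` for some `c`. -/
theorem separatelyAdditive_bounded_eq_mul_prod (n : ℕ) (G : (Fin n → ℝ) → ℝ)
    (hadd : ∀ (i : Fin n) (a : Fin n → ℝ) (x y : ℝ),
      G (Function.update a i (x + y)) = G (Function.update a i x) + G (Function.update a i y))
    (U : Set (Fin n → ℝ)) (hU : (interior U).Nonempty)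
    (M : ℝ) (hbdd : ∀ u ∈ U, |G u| ≤ M) :
    ∃ c : ℝ, ∀ x : Fin n → ℝ, G x = c * ∏ i, x i := by
  obtain ⟨a, ha⟩ := hU
  obtain ⟨ε, hε, hball⟩ := Metric.mem_nhds_iff.mp (mem_interior_iff_mem_nhds.mp ha)
  refine ⟨G (fun _ => 1), ?_⟩
  apply aux_sep n G hadd a (ε / 2) M (by linarith)
  intro u hu
  apply hbdd
  apply hball
  rw [Metric.mem_ball]
  have hd : dist u a ≤ ε / 2 := by
    rw [dist_pi_le_iff (by linarith)]
    intro i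
    rw [Real.dist_eq]
    exact hu i
  linarith
end

section
/- Let G : ℝⁿ → ℝ be separately additive and Borel measurable. Then G is separately linear: there exists c ∈ ℝ such that G(x₁,…,xₙ) = c · x₁ ⋯ xₙ. -/
/-! A measurable additive map `ℝ → ℝ` is continuous (Steinhaus), hence linear. So `G` is
linear in each coordinate, and factoring out the coordinates one at a time turns `x` into the
all-ones vector: `G x = (∏ i, x i) * G 1`. -/

open Function MeasureTheory.Measure

theorem eq_smul_of_map_add_of_measurable {E : Type*} [NormedAddCommGroup E] [NormedSpace ℝ E]
    [MeasurableSpace E] [BorelSpace E] (f : ℝ → E) (hf : ∀ x y, f (x + y) = f x + f y)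
    (hm : Measurable f) (x : ℝ) : f x = x • f 1 := by
  let F : ℝ →+ E := AddMonoidHom.mk' f hf
  simpa [F] using map_real_smul F (F.continuous_of_measurable hm) x 1

theorem eq_prod_smul_of_update_eq_smul {ι R M : Type*} [Fintype ι] [DecidableEq ι]
    [CommSemiring R] [AddCommMonoid M] [Module R M] (G : (ι → R) → M)
    (hG : ∀ i a t, G (update a i t) = t • G (update a i 1)) (x : ι → R) :
    G x = (∏ i, x i) • G 1 := by
  suffices h : ∀ s : Finset ι, G x = (∏ i ∈ s, x i) • G (s.piecewise (1 : ι → R) x) by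
    simpa using h Finset.univ
  intro s
  induction s using Finset.induction_on with
  | empty => simp
  | @insert i s hi ih =>
    have hxi : s.piecewise (1 : ι → R) x = update (s.piecewise (1 : ι → R) x) i (x i) :=
      (update_eq_self_iff.2 (Finset.piecewise_eq_of_notMem _ _ _ hi).symm).symm
    rw [ih, hxi, hG, Finset.prod_insert hi, mul_comm, mul_smul, Finset.piecewise_insert,
      Pi.one_apply]

/-- A separately additive, Borel measurable function `G : ℝⁿ → ℝ` is separately
linear: `G x = c * ∏ i, x i` for some `c`. -/
theorem separatelyAdditive_measurable_eq_mul_prod (n : ℕ) (G : (Fin n → ℝ) → ℝ)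
    (hadd : ∀ (i : Fin n) (a : Fin n → ℝ) (x y : ℝ),
      G (Function.update a i (x + y)) = G (Function.update a i x) + G (Function.update a i y))
    (hmeas : Measurable G) :
    ∃ c : ℝ, ∀ x : Fin n → ℝ, G x = c * ∏ i, x i := by
  have hlin : ∀ i a t, G (update a i t) = t • G (update a i 1) := fun i a t ↦
    eq_smul_of_map_add_of_measurable (fun s ↦ G (update a i s)) (hadd i a)
      (hmeas.comp (measurable_update a)) t
  exact ⟨G 1, fun x ↦ by rw [eq_prod_smul_of_update_eq_smul G hlin x, smul_eq_mul, mul_comm]⟩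
end

section
/- Let K₁ and K₂ be axis-parallel boxes in ℝⁿ, K_j = ∏ᵢ [aᵢʲ, bᵢʲ] with aᵢʲ ≤ bᵢʲ. If K₁ ∪ K₂ is again an axis-parallel box (a product of closed intervals), then either K₁ ⊆ K₂, or K₂ ⊆ K₁, or there exists exactly one index k such that [aᵢ¹,bᵢ¹] = [aᵢ²,bᵢ²] for all i ≠ k, while neither of the intervals [a_k¹,b_k¹] and [a_k²,b_k²] contains the other. -/
private lemma false_aux (n : ℕ) (a₁ b₁ a₂ b₂ : Fin n → ℝ) (h₁ : a₁ ≤ b₁) (h₂ : a₂ ≤ b₂)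
    (hle_a : a₁ ≤ a₂) (hle_b : b₁ ≤ b₂)
    (hU : Set.Icc a₁ b₁ ∪ Set.Icc a₂ b₂ = Set.Icc a₁ b₂)
    (k l : Fin n) (hkl : k ≠ l) (hbk : b₁ k < b₂ k) (hal : a₁ l < a₂ l) : False := by
  set x : Fin n → ℝ := fun i => if i = k then b₂ k else if i = l then a₁ l else a₁ i with hx
  have hxk : x k = b₂ k := by simp [hx]
  have hxl : x l = a₁ l := by simp [hx, Ne.symm hkl]
  have hmem : x ∈ Set.Icc a₁ b₂ := by
    refine ⟨fun i => ?_, fun i => ?_⟩ <;> simp only [hx]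
    · split_ifs with h h'
      · subst h; exact (hle_a i).trans (h₂ i)
      · subst h'; exact le_rfl
      · exact le_rfl
    · split_ifs with h h'
      · subst h; exact le_rfl
      · subst h'; exact (h₁ i).trans (hle_b i)
      · exact (h₁ i).trans (hle_b i)
  rw [← hU] at hmem
  rcases hmem with h | h
  · exact absurd (hxk ▸ h.2 k) hbk.not_ge
  · exact absurd (hxl ▸ h.1 l) hal.not_ge

private lemma main_aux (n : ℕ) (a₁ b₁ a₂ b₂ : Fin n → ℝ) (h₁ : a₁ ≤ b₁) (h₂ : a₂ ≤ b₂)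
    (hle_a : a₁ ≤ a₂) (hle_b : b₁ ≤ b₂)
    (hU : Set.Icc a₁ b₁ ∪ Set.Icc a₂ b₂ = Set.Icc a₁ b₂) :
    Set.Icc a₁ b₁ ⊆ Set.Icc a₂ b₂ ∨ Set.Icc a₂ b₂ ⊆ Set.Icc a₁ b₁ ∨
      ∃! k : Fin n, (∀ i : Fin n, i ≠ k → a₁ i = a₂ i ∧ b₁ i = b₂ i) ∧
        ¬ Set.Icc (a₁ k) (b₁ k) ⊆ Set.Icc (a₂ k) (b₂ k) ∧
        ¬ Set.Icc (a₂ k) (b₂ k) ⊆ Set.Icc (a₁ k) (b₁ k) := by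
  by_cases hbad : ∃ k, a₁ k < a₂ k ∧ b₁ k < b₂ k
  · obtain ⟨k, hak, hbk⟩ := hbad
    refine Or.inr (Or.inr ⟨k, ⟨fun i hik => ?_, ?_, ?_⟩, ?_⟩)
    · constructor
      · refine le_antisymm (hle_a i) (not_lt.1 fun hai => ?_)
        exact false_aux n a₁ b₁ a₂ b₂ h₁ h₂ hle_a hle_b hU k i (Ne.symm hik) hbk hai
      · refine le_antisymm (hle_b i) (not_lt.1 fun hbi => ?_)
        exact false_aux n a₁ b₁ a₂ b₂ h₁ h₂ hle_a hle_b hU i k hik hbi hak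
    · intro h
      exact absurd (h ⟨le_rfl, h₁ k⟩).1 hak.not_ge
    · intro h
      exact absurd (h ⟨h₂ k, le_rfl⟩).2 hbk.not_ge
    · rintro k' ⟨heq, hns, -⟩
      by_contra hkk'
      have h1 : a₁ k' = a₂ k' := by
        have := heq k (fun h => hkk' h.symm)
        by_contra hne
        have hlt : a₁ k' < a₂ k' := lt_of_le_of_ne (hle_a k') hne
        exact false_aux n a₁ b₁ a₂ b₂ h₁ h₂ hle_a hle_b hU k k'
          (fun h => hkk' h.symm) hbk hlt
      exact hns fun x hx => ⟨h1 ▸ hx.1, hx.2.trans (hle_b k')⟩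
  · push_neg at hbad
    by_cases hA : ∀ i, a₁ i = a₂ i
    · refine Or.inl fun x hx => ⟨fun i => (hA i) ▸ hx.1 i, fun i => (hx.2 i).trans (hle_b i)⟩
    · push_neg at hA
      obtain ⟨l, hl⟩ := hA
      have hal : a₁ l < a₂ l := lt_of_le_of_ne (hle_a l) hl
      have hB : ∀ i, b₁ i = b₂ i := by
        intro i
        refine le_antisymm (hle_b i) (not_lt.1 fun hbi => ?_)
        rcases eq_or_ne i l with rfl | hil
        · exact absurd hbi (not_lt.2 (hbad i hal))
        · exact false_aux n a₁ b₁ a₂ b₂ h₁ h₂ hle_a hle_b hU i l hil hbi hal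
      refine Or.inr (Or.inl fun x hx => ⟨fun i => (hle_a i).trans (hx.1 i),
        fun i => (hx.2 i).trans_eq (hB i).symm⟩)

/-- If the union of two axis-parallel boxes is an axis-parallel box, then either one
contains the other, or they differ in exactly one coordinate, where neither interval
contains the other. -/
theorem union_boxes_isBox (n : ℕ) (a₁ b₁ a₂ b₂ : Fin n → ℝ)
    (h₁ : a₁ ≤ b₁) (h₂ : a₂ ≤ b₂)
    (hU : ∃ c d : Fin n → ℝ, c ≤ d ∧ Set.Icc a₁ b₁ ∪ Set.Icc a₂ b₂ = Set.Icc c d) :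
    Set.Icc a₁ b₁ ⊆ Set.Icc a₂ b₂ ∨ Set.Icc a₂ b₂ ⊆ Set.Icc a₁ b₁ ∨
      ∃! k : Fin n, (∀ i : Fin n, i ≠ k → a₁ i = a₂ i ∧ b₁ i = b₂ i) ∧
        ¬ Set.Icc (a₁ k) (b₁ k) ⊆ Set.Icc (a₂ k) (b₂ k) ∧
        ¬ Set.Icc (a₂ k) (b₂ k) ⊆ Set.Icc (a₁ k) (b₁ k) := by
  obtain ⟨c, d, hcd, hUeq⟩ := hU
  have ha₁ : a₁ ∈ Set.Icc c d := hUeq ▸ Or.inl ⟨le_rfl, h₁⟩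
  have ha₂ : a₂ ∈ Set.Icc c d := hUeq ▸ Or.inr ⟨le_rfl, h₂⟩
  have hb₁ : b₁ ∈ Set.Icc c d := hUeq ▸ Or.inl ⟨h₁, le_rfl⟩
  have hb₂ : b₂ ∈ Set.Icc c d := hUeq ▸ Or.inr ⟨h₂, le_rfl⟩
  have hc : c ∈ Set.Icc a₁ b₁ ∪ Set.Icc a₂ b₂ := hUeq ▸ Set.mem_Icc.2 ⟨le_rfl, hcd⟩
  have hd : d ∈ Set.Icc a₁ b₁ ∪ Set.Icc a₂ b₂ := hUeq ▸ Set.mem_Icc.2 ⟨hcd, le_rfl⟩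
  have hc' : c = a₁ ∨ c = a₂ := by
    rcases hc with h | h
    · exact Or.inl (le_antisymm ha₁.1 h.1)
    · exact Or.inr (le_antisymm ha₂.1 h.1)
  have hd' : d = b₁ ∨ d = b₂ := by
    rcases hd with h | h
    · exact Or.inl (le_antisymm h.2 hb₁.2)
    · exact Or.inr (le_antisymm h.2 hb₂.2)
  rcases hc' with hca | hca <;> rcases hd' with hdb | hdb
  · refine Or.inr (Or.inl ?_)
    rw [hca, hdb] at hUeq; rw [← hUeq]; exact Set.subset_union_right
  · rw [hca, hdb] at hUeq
    exact main_aux n a₁ b₁ a₂ b₂ h₁ h₂ (hca ▸ ha₂.1) (hdb ▸ hb₁.2) hUeq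
  · rw [hca, hdb] at hUeq
    have := main_aux n a₂ b₂ a₁ b₁ h₂ h₁ (hca ▸ ha₁.1) (hdb ▸ hb₂.2)
      (Set.union_comm _ _ ▸ hUeq)
    rcases this with h | h | ⟨k, ⟨heq, hs1, hs2⟩, huniq⟩
    · exact Or.inr (Or.inl h)
    · exact Or.inl h
    · refine Or.inr (Or.inr ⟨k, ⟨fun i hi => ⟨(heq i hi).1.symm, (heq i hi).2.symm⟩, hs2, hs1⟩,
        ?_⟩)
      rintro k' ⟨e, p, q⟩
      exact huniq k' ⟨fun i hi => ⟨(e i hi).1.symm, (e i hi).2.symm⟩, q, p⟩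
  · refine Or.inl ?_
    rw [hca, hdb] at hUeq; rw [← hUeq]; exact Set.subset_union_left
end

section
/- Let V be a translation invariant real-valued function on axis-parallel boxes in ℝⁿ, and define F : ℝ₊ⁿ → ℝ by F(a₁,…,aₙ) = V(∏ᵢ[0,aᵢ]). Then V is a valuation (V(K∪L) + V(K∩L) = V(K) + V(L) whenever K, L and K∪L are boxes) if and only if F is separately affine additive, i.e., in each variable it satisfies f(x+y) = f(x)+f(y)−f(0). -/
/-- An axis-parallel box in `ℝⁿ`. -/
def IsBox {n : ℕ} (S : Set (Fin n → ℝ)) : Prop :=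
  ∃ a b : Fin n → ℝ, a ≤ b ∧ S = Set.Icc a b

private lemma aux_main {n : ℕ} (V : Set (Fin n → ℝ) → ℝ)
    (htr : ∀ u v : Fin n → ℝ, u ≤ v → V (Set.Icc u v) = V (Set.Icc 0 (v - u)))
    (hF : ∀ (i : Fin n) (a : Fin n → ℝ), 0 ≤ a → ∀ x y : ℝ, 0 ≤ x → 0 ≤ y →
        V (Set.Icc 0 (Function.update a i (x + y))) =
          V (Set.Icc 0 (Function.update a i x)) + V (Set.Icc 0 (Function.update a i y)) -
            V (Set.Icc 0 (Function.update a i 0)))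
    (a b c d : Fin n → ℝ) (hab : a ≤ b) (hcd : c ≤ d) (hac : a ≤ c) (hbd : b ≤ d)
    (hU : Set.Icc a b ∪ Set.Icc c d = Set.Icc a d)
    (hnLK : ¬ Set.Icc c d ⊆ Set.Icc a b) (hnKL : ¬ Set.Icc a b ⊆ Set.Icc c d) :
    V (Set.Icc a d) + V (Set.Icc a b ∩ Set.Icc c d) = V (Set.Icc a b) + V (Set.Icc c d) := by
  -- find the special coordinates
  have hdb : ¬ d ≤ b := by
    intro h
    exact hnLK (Set.Icc_subset_Icc hac h)
  have hca : ¬ c ≤ a := by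
    intro h
    exact hnKL (Set.Icc_subset_Icc h hbd)
  rw [Pi.le_def] at hdb hca
  push_neg at hdb hca
  obtain ⟨i, hi⟩ := hdb
  obtain ⟨j, hj⟩ := hca
  -- key uniqueness claim
  have key : ∀ k l : Fin n, b k < d k → a l < c l → k = l := by
    intro k l hk hl
    by_contra hne
    set z := Function.update a k (d k) with hz
    have hzmem : z ∈ Set.Icc a d := by
      constructor
      · intro m
        by_cases hm : m = k
        · subst hm; simp [hz, Function.update_self]
          exact le_trans (hab m) (le_of_lt hk)
        · simp [hz, Function.update_of_ne hm]
      · intro m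
        by_cases hm : m = k
        · subst hm; simp [hz, Function.update_self]
        · simp [hz, Function.update_of_ne hm]
          exact le_trans (hac m) (hcd m)
    rw [← hU] at hzmem
    rcases hzmem with h | h
    · have := h.2 k
      simp [hz, Function.update_self] at this
      linarith
    · have := h.1 l
      simp [hz, Function.update_of_ne (Ne.symm hne)] at this
      linarith
  have hij : i = j := key i j hi hj
  -- all other coordinates agree
  have h1 : ∀ k, k ≠ i → b k = d k := by
    intro k hk
    by_contra hne
    have hlt : b k < d k := lt_of_le_of_ne (hbd k) hne
    exact hk ((key k j hlt hj).trans hij.symm)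
  have h2 : ∀ k, k ≠ i → a k = c k := by
    intro k hk
    by_contra hne
    have hlt : a k < c k := lt_of_le_of_ne (hac k) hne
    exact hk (key i k hi hlt).symm
  -- overlap
  have hcb : c i ≤ b i := by
    by_contra hlt
    push_neg at hlt
    set z := Function.update a i ((b i + c i) / 2) with hz
    have hzmem : z ∈ Set.Icc a d := by
      constructor
      · intro m
        by_cases hm : m = i
        · subst hm; simp [hz, Function.update_self]
          have := hab m; linarith
        · simp [hz, Function.update_of_ne hm]
      · intro m
        by_cases hm : m = i
        · subst hm; simp [hz, Function.update_self]
          have := hcd m; linarith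
        · simp [hz, Function.update_of_ne hm]
          exact le_trans (hac m) (hcd m)
    rw [← hU] at hzmem
    rcases hzmem with h | h
    · have := h.2 i
      simp [hz, Function.update_self] at this
      linarith
    · have := h.1 i
      simp [hz, Function.update_self] at this
      linarith
  -- the intersection
  have hclb : c ≤ b := by
    intro k
    by_cases hk : k = i
    · subst hk; exact hcb
    · rw [← h2 k hk]; exact hab k
  have hinter : Set.Icc a b ∩ Set.Icc c d = Set.Icc c b := by
    rw [Set.Icc_inter_Icc, sup_eq_right.mpr hac, inf_eq_left.mpr hbd]
  -- set up the one-variable function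
  set e : Fin n → ℝ := fun k => b k - a k with he
  have he0 : (0 : Fin n → ℝ) ≤ e := fun k => sub_nonneg.mpr (hab k)
  set u := c i - a i with hu
  set v := b i - c i with hv
  set w := d i - b i with hw
  have hu0 : (0:ℝ) ≤ u := sub_nonneg.mpr (hac i)
  have hv0 : (0:ℝ) ≤ v := sub_nonneg.mpr hcb
  have hw0 : (0:ℝ) ≤ w := sub_nonneg.mpr (hbd i)
  have eq1 : d - a = Function.update e i (u + (v + w)) := by
    funext k
    by_cases hk : k = i
    · subst hk; simp only [Function.update_self, Pi.sub_apply, hu, hv, hw]; ring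
    · simp [Function.update_of_ne hk, he, Pi.sub_apply, ← h1 k hk]
  have eq2 : b - c = Function.update e i v := by
    funext k
    by_cases hk : k = i
    · subst hk; simp only [Function.update_self, Pi.sub_apply, hv]
    · simp [Function.update_of_ne hk, he, Pi.sub_apply, ← h2 k hk]
  have eq3 : b - a = Function.update e i (u + v) := by
    funext k
    by_cases hk : k = i
    · subst hk; simp only [Function.update_self, Pi.sub_apply, hu, hv]; ring
    · simp [Function.update_of_ne hk, he, Pi.sub_apply]
  have eq4 : d - c = Function.update e i (v + w) := by
    funext k
    by_cases hk : k = i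
    · subst hk; simp only [Function.update_self, Pi.sub_apply, hv, hw]; ring
    · simp [Function.update_of_ne hk, he, Pi.sub_apply, ← h1 k hk, ← h2 k hk]
  have had : a ≤ d := le_trans hab hbd
  rw [hinter, htr a d had, htr c b hclb, htr a b hab, htr c d hcd, eq1, eq2, eq3, eq4]
  have H1 := hF i e he0 u (v + w) hu0 (by linarith)
  have H2 := hF i e he0 u v hu0 hv0
  linarith

/-- A translation invariant map `V` on axis-parallel boxes is a valuation if and only
if `F(a₁,…,aₙ) = V(∏ᵢ[0,aᵢ])` is separately affine additive on `ℝ₊ⁿ`. -/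
theorem valuation_iff_sepAffineAdditive (n : ℕ) (V : Set (Fin n → ℝ) → ℝ)
    (htrans : ∀ (S : Set (Fin n → ℝ)) (x : Fin n → ℝ),
      IsBox S → V ((fun p => p + x) '' S) = V S) :
    (∀ K L : Set (Fin n → ℝ), IsBox K → IsBox L → IsBox (K ∪ L) →
        V (K ∪ L) + V (K ∩ L) = V K + V L) ↔
      (∀ (i : Fin n) (a : Fin n → ℝ), 0 ≤ a → ∀ x y : ℝ, 0 ≤ x → 0 ≤ y →
        V (Set.Icc 0 (Function.update a i (x + y))) =
          V (Set.Icc 0 (Function.update a i x)) + V (Set.Icc 0 (Function.update a i y)) -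
            V (Set.Icc 0 (Function.update a i 0))) := by
  have htr : ∀ u v : Fin n → ℝ, u ≤ v → V (Set.Icc u v) = V (Set.Icc 0 (v - u)) := by
    intro u v huv
    have hbox : IsBox (Set.Icc (0 : Fin n → ℝ) (v - u)) :=
      ⟨0, v - u, sub_nonneg.mpr huv, rfl⟩
    have h := htrans _ u hbox
    rw [Set.image_add_const_Icc] at h
    simpa using h
  constructor
  · -- valuation → separately affine additive
    intro hval i a ha x y hx hy
    set K := Set.Icc (0 : Fin n → ℝ) (Function.update a i x) with hK
    set L := Set.Icc (Function.update (0 : Fin n → ℝ) i x) (Function.update a i (x + y)) with hL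
    have hKle : (0 : Fin n → ℝ) ≤ Function.update a i x := by
      intro k
      by_cases hk : k = i
      · subst hk; simpa using hx
      · simpa [Function.update_of_ne hk] using ha k
    have hLle : Function.update (0 : Fin n → ℝ) i x ≤ Function.update a i (x + y) := by
      intro k
      by_cases hk : k = i
      · subst hk; simp; linarith
      · simpa [Function.update_of_ne hk] using ha k
    have hunion : K ∪ L = Set.Icc 0 (Function.update a i (x + y)) := by
      ext z
      simp only [hK, hL, Set.mem_union, Set.mem_Icc, Pi.le_def]
      constructor
      · rintro (⟨h1, h2⟩ | ⟨h1, h2⟩)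
        · refine ⟨h1, fun k => le_trans (h2 k) ?_⟩
          by_cases hk : k = i
          · subst hk; simp; linarith
          · simp [Function.update_of_ne hk]
        · refine ⟨fun k => le_trans ?_ (h1 k), h2⟩
          by_cases hk : k = i
          · subst hk; simpa using hx
          · simp [Function.update_of_ne hk]
      · rintro ⟨h1, h2⟩
        by_cases hz : z i ≤ x
        · left
          refine ⟨h1, fun k => ?_⟩
          by_cases hk : k = i
          · subst hk; simpa using hz
          · have := h2 k
            simpa [Function.update_of_ne hk] using this
        · right
          push_neg at hz
          refine ⟨fun k => ?_, h2⟩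
          by_cases hk : k = i
          · subst hk; simpa using le_of_lt hz
          · simpa [Function.update_of_ne hk] using h1 k
    have hinter : K ∩ L = Set.Icc (Function.update (0 : Fin n → ℝ) i x) (Function.update a i x) := by
      have hsup : (0 : Fin n → ℝ) ⊔ Function.update (0 : Fin n → ℝ) i x =
          Function.update (0 : Fin n → ℝ) i x :=
        sup_eq_right.mpr (fun k => by
          by_cases hk : k = i
          · subst hk; simpa using hx
          · simp [Function.update_of_ne hk])
      have hinf : Function.update a i x ⊓ Function.update a i (x + y) =
          Function.update a i x :=
        inf_eq_left.mpr (fun k => by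
          by_cases hk : k = i
          · subst hk; simp; linarith
          · simp [Function.update_of_ne hk])
      rw [hK, hL, Set.Icc_inter_Icc, hsup, hinf]
    have hres := hval K L ⟨_, _, hKle, rfl⟩ ⟨_, _, hLle, rfl⟩
      ⟨_, _, by
        intro k
        by_cases hk : k = i
        · subst hk; simp; linarith
        · simpa [Function.update_of_ne hk] using ha k, hunion⟩
    rw [hunion, hinter] at hres
    have hveq1 : Function.update a i (x + y) - Function.update (0 : Fin n → ℝ) i x =
        Function.update a i y := by
      funext k
      by_cases hk : k = i
      · subst hk; simp
      · simp [Function.update_of_ne hk]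
    have hL' : V L = V (Set.Icc 0 (Function.update a i y)) := by
      rw [hL, htr _ _ hLle, hveq1]
    have hveq2 : Function.update a i x - Function.update (0 : Fin n → ℝ) i x =
        Function.update a i 0 := by
      funext k
      by_cases hk : k = i
      · subst hk; simp
      · simp [Function.update_of_ne hk]
    have hIle : Function.update (0 : Fin n → ℝ) i x ≤ Function.update a i x := by
      intro k
      by_cases hk : k = i
      · subst hk; simp
      · simpa [Function.update_of_ne hk] using ha k
    have hI' : V (Set.Icc (Function.update (0 : Fin n → ℝ) i x) (Function.update a i x)) =
        V (Set.Icc 0 (Function.update a i 0)) := by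
      rw [htr _ _ hIle, hveq2]
    rw [hI'] at hres
    rw [← hL']
    linarith
  · -- separately affine additive → valuation
    intro hF K L hK hL hKL
    obtain ⟨a, b, hab, rfl⟩ := hK
    obtain ⟨c, d, hcd, rfl⟩ := hL
    obtain ⟨p, q, hpq, hU⟩ := hKL
    by_cases hLK : Set.Icc c d ⊆ Set.Icc a b
    · rw [Set.union_eq_self_of_subset_right hLK, Set.inter_eq_self_of_subset_right hLK]
    by_cases hKL' : Set.Icc a b ⊆ Set.Icc c d
    · rw [Set.union_eq_self_of_subset_left hKL', Set.inter_eq_self_of_subset_left hKL']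
      ring
    have haU : a ∈ Set.Icc p q := by rw [← hU]; exact Or.inl (Set.left_mem_Icc.mpr hab)
    have hbU : b ∈ Set.Icc p q := by rw [← hU]; exact Or.inl (Set.right_mem_Icc.mpr hab)
    have hcU : c ∈ Set.Icc p q := by rw [← hU]; exact Or.inr (Set.left_mem_Icc.mpr hcd)
    have hdU : d ∈ Set.Icc p q := by rw [← hU]; exact Or.inr (Set.right_mem_Icc.mpr hcd)
    have hpmem : p ∈ Set.Icc a b ∪ Set.Icc c d := by rw [hU]; exact Set.left_mem_Icc.mpr hpq
    have hqmem : q ∈ Set.Icc a b ∪ Set.Icc c d := by rw [hU]; exact Set.right_mem_Icc.mpr hpq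
    rcases hpmem with hp | hp <;> rcases hqmem with hq | hq
    · -- p ∈ K, q ∈ K : L ⊆ K
      have hpa : p = a := le_antisymm haU.1 hp.1
      have hqb : q = b := le_antisymm hq.2 hbU.2
      refine absurd (fun z hz => ?_) hLK
      have hmem : z ∈ Set.Icc p q := hU ▸ Set.subset_union_right hz
      rw [hpa, hqb] at hmem
      exact hmem
    · -- p ∈ K, q ∈ L : main case
      have hpa : p = a := le_antisymm haU.1 hp.1
      have hqd : q = d := le_antisymm hq.2 hdU.2
      subst hpa; subst hqd
      have hac : p ≤ c := hcU.1
      have hbd : b ≤ q := hbU.2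
      rw [hU]
      exact aux_main V htr hF p b c q hab hcd hac hbd hU hLK hKL'
    · -- p ∈ L, q ∈ K : symmetric
      have hpc : p = c := le_antisymm hcU.1 hp.1
      have hqb : q = b := le_antisymm hq.2 hbU.2
      subst hpc; subst hqb
      have hca : p ≤ a := haU.1
      have hdb : d ≤ q := hdU.2
      have hU' : Set.Icc p d ∪ Set.Icc a q = Set.Icc p q := by
        rw [Set.union_comm] at hU
        exact hU
      have haux := aux_main V htr hF p d a q hcd hab hca hdb hU' hKL' hLK
      rw [hU, Set.inter_comm]
      linarith
    · -- p ∈ L, q ∈ L : K ⊆ L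
      have hpc : p = c := le_antisymm hcU.1 hp.1
      have hqd : q = d := le_antisymm hq.2 hdU.2
      refine absurd (fun z hz => ?_) hKL'
      have hmem : z ∈ Set.Icc p q := hU ▸ Set.subset_union_left hz
      rw [hpc, hqd] at hmem
      exact hmem
end

section
/- A function F : ℝ₊ⁿ → ℝ is separately affine additive if and only if for every subset I ⊆ {1,…,n} there exists a separately additive function G_I : ℝ₊^{|I|} → ℝ (with G_∅ a constant) such that F(a₁,…,aₙ) = Σ_{I ⊆ {1,…,n}} G_I((aᵢ)_{i∈I}). Moreover this decomposition is unique. -/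
open scoped NNReal

/-- `F` is separately affine additive on `ℝ₊ⁿ`. -/
def SepAffineAdditive {n : ℕ} (F : (Fin n → ℝ≥0) → ℝ) : Prop :=
  ∀ (i : Fin n) (a : Fin n → ℝ≥0) (x y : ℝ≥0),
    F (Function.update a i (x + y)) =
      F (Function.update a i x) + F (Function.update a i y) - F (Function.update a i 0)

/-- `G` depends only on the coordinates in `I` and is additive in each coordinate of `I`
(so for `I = ∅` it is a constant). -/
def SepAdditiveOn {n : ℕ} (I : Finset (Fin n)) (G : (Fin n → ℝ≥0) → ℝ) : Prop :=
  (∀ a b : Fin n → ℝ≥0, (∀ i ∈ I, a i = b i) → G a = G b) ∧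
    ∀ i ∈ I, ∀ (a : Fin n → ℝ≥0) (x y : ℝ≥0),
      G (Function.update a i (x + y)) = G (Function.update a i x) + G (Function.update a i y)

open Finset

namespace SepAux

variable {n : ℕ}

/-- Restrict `a` to coordinates in `J`, zero elsewhere. -/
def mask (a : Fin n → ℝ≥0) (J : Finset (Fin n)) : Fin n → ℝ≥0 :=
  fun i => if i ∈ J then a i else 0

lemma mask_univ (a : Fin n → ℝ≥0) : mask a Finset.univ = a := by
  funext i; simp [mask]

lemma mask_congr {a b : Fin n → ℝ≥0} {J : Finset (Fin n)} (h : ∀ i ∈ J, a i = b i) :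
    mask a J = mask b J := by
  funext i; by_cases hi : i ∈ J <;> simp [mask, hi, h i]

lemma mask_update_notMem {a : Fin n → ℝ≥0} {J : Finset (Fin n)} {i : Fin n} (hi : i ∉ J)
    (z : ℝ≥0) : mask (Function.update a i z) J = mask a J := by
  funext j
  by_cases hj : j ∈ J
  · have : j ≠ i := fun h => hi (h ▸ hj)
    simp [mask, hj, Function.update_of_ne this]
  · simp [mask, hj]

lemma mask_insert_update {a : Fin n → ℝ≥0} {J : Finset (Fin n)} {i : Fin n} (hi : i ∉ J)
    (z : ℝ≥0) : mask (Function.update a i z) (insert i J) = Function.update (mask a J) i z := by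
  funext j
  by_cases hj : j = i
  · subst hj; simp [mask]
  · have hmem : j ∈ insert i J ↔ j ∈ J := by simp [hj]
    by_cases hJ : j ∈ J <;>
      simp [mask, hmem, hJ, Function.update_of_ne hj]

lemma mask_self_zero {a : Fin n → ℝ≥0} {J : Finset (Fin n)} {i : Fin n} (hi : i ∉ J) :
    Function.update (mask a J) i 0 = mask a J := by
  have : mask a J i = 0 := by simp [mask, hi]
  conv_rhs => rw [← Function.update_eq_self i (mask a J)]
  rw [this]

/-- key alternating-sum identity -/
lemma alt_sum (I K : Finset (Fin n)) (hK : K ⊆ I) :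
    ∑ J ∈ I.powerset.filter (fun J => K ⊆ J), (-1 : ℝ) ^ ((I \ J).card)
      = if K = I then 1 else 0 := by
  have h1 : ∑ J ∈ I.powerset.filter (fun J => K ⊆ J), (-1 : ℝ) ^ ((I \ J).card)
      = ∑ M ∈ (I \ K).powerset, (-1 : ℝ) ^ M.card := by
    refine Finset.sum_nbij' (fun J => I \ J) (fun M => I \ M) ?_ ?_ ?_ ?_ ?_
    · intro J hJ
      rw [mem_filter, mem_powerset] at hJ
      rw [mem_powerset]
      exact sdiff_subset_sdiff le_rfl hJ.2
    · intro M hM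
      rw [mem_powerset] at hM
      rw [mem_filter, mem_powerset]
      constructor
      · exact sdiff_subset
      · intro k hk
        rw [mem_sdiff]
        refine ⟨hK hk, fun hkM => ?_⟩
        have := hM hkM
        rw [mem_sdiff] at this
        exact this.2 hk
    · intro J hJ
      rw [mem_filter, mem_powerset] at hJ
      exact Finset.sdiff_sdiff_eq_self hJ.1
    · intro M hM
      rw [mem_powerset] at hM
      exact Finset.sdiff_sdiff_eq_self (hM.trans sdiff_subset)
    · intro J hJ; rfl
  rw [h1]
  have h2 : ∑ M ∈ (I \ K).powerset, (-1 : ℝ) ^ M.card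
      = ((∑ M ∈ (I \ K).powerset, (-1 : ℤ) ^ M.card : ℤ) : ℝ) := by
    push_cast; rfl
  rw [h2, Finset.sum_powerset_neg_one_pow_card]
  by_cases h : K = I
  · simp [h]
  · have : I \ K ≠ ∅ := by
      rw [← Finset.nonempty_iff_ne_empty, Finset.sdiff_nonempty]
      intro hIK
      exact h (le_antisymm hK hIK)
    simp [this, h]

/-- key alternating-sum identity, second form -/
lemma alt_sum2 (I K : Finset (Fin n)) (hK : K ⊆ I) :
    ∑ J ∈ I.powerset.filter (fun J => K ⊆ J), (-1 : ℝ) ^ ((J \ K).card)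
      = if K = I then 1 else 0 := by
  have h1 : ∑ J ∈ I.powerset.filter (fun J => K ⊆ J), (-1 : ℝ) ^ ((J \ K).card)
      = ∑ M ∈ (I \ K).powerset, (-1 : ℝ) ^ M.card := by
    refine Finset.sum_nbij' (fun J => J \ K) (fun M => M ∪ K) ?_ ?_ ?_ ?_ ?_
    · intro J hJ
      rw [mem_filter, mem_powerset] at hJ
      rw [mem_powerset]
      exact sdiff_subset_sdiff hJ.1 le_rfl
    · intro M hM
      rw [mem_powerset] at hM
      rw [mem_filter, mem_powerset]
      exact ⟨union_subset (hM.trans sdiff_subset) hK, subset_union_right⟩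
    · intro J hJ
      rw [mem_filter, mem_powerset] at hJ
      exact sdiff_union_of_subset hJ.2
    · intro M hM
      rw [mem_powerset] at hM
      ext j
      simp only [mem_sdiff, mem_union]
      constructor
      · rintro ⟨h | h, h2⟩
        · exact h
        · exact absurd h h2
      · intro h
        exact ⟨Or.inl h, fun hc => (mem_sdiff.mp (hM h)).2 hc⟩
    · intro J hJ; rfl
  rw [h1]
  have h2 : ∑ M ∈ (I \ K).powerset, (-1 : ℝ) ^ M.card
      = ((∑ M ∈ (I \ K).powerset, (-1 : ℤ) ^ M.card : ℤ) : ℝ) := by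
    push_cast; rfl
  rw [h2, Finset.sum_powerset_neg_one_pow_card]
  by_cases h : K = I
  · simp [h]
  · have : I \ K ≠ ∅ := by
      rw [← Finset.nonempty_iff_ne_empty, Finset.sdiff_nonempty]
      intro hIK
      exact h (le_antisymm hK hIK)
    simp [this, h]

/-- swap the double powerset sum -/
lemma double_sum (I : Finset (Fin n)) (f : Finset (Fin n) → Finset (Fin n) → ℝ) :
    ∑ J ∈ I.powerset, ∑ K ∈ J.powerset, f J K
      = ∑ K ∈ I.powerset, ∑ J ∈ I.powerset.filter (fun J => K ⊆ J), f J K := by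
  refine Finset.sum_comm' ?_
  intro J K
  simp only [mem_powerset, mem_filter]
  constructor
  · rintro ⟨h1, h2⟩; exact ⟨⟨h1, h2⟩, h2.trans h1⟩
  · rintro ⟨⟨h1, h2⟩, h3⟩; exact ⟨h1, h2⟩

/-- Möbius inversion on subsets. -/
lemma mobius (f g : Finset (Fin n) → ℝ)
    (h : ∀ J : Finset (Fin n), f J = ∑ K ∈ J.powerset, g K) (I : Finset (Fin n)) :
    g I = ∑ J ∈ I.powerset, (-1 : ℝ) ^ ((I \ J).card) * f J := by
  have : ∑ J ∈ I.powerset, (-1 : ℝ) ^ ((I \ J).card) * f J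
      = ∑ J ∈ I.powerset, ∑ K ∈ J.powerset, (-1 : ℝ) ^ ((I \ J).card) * g K := by
    refine Finset.sum_congr rfl fun J _ => ?_
    rw [h J, Finset.mul_sum]
  rw [this, double_sum]
  have : ∀ K ∈ I.powerset,
      ∑ J ∈ I.powerset.filter (fun J => K ⊆ J), (-1 : ℝ) ^ ((I \ J).card) * g K
        = (if K = I then 1 else 0) * g K := by
    intro K hK
    rw [← Finset.sum_mul, alt_sum I K (mem_powerset.mp hK)]
  rw [Finset.sum_congr rfl this]
  simp [Finset.sum_ite_eq' I.powerset I, Finset.mem_powerset]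

/-- the candidate decomposition -/
noncomputable def gg (F : (Fin n → ℝ≥0) → ℝ) (I : Finset (Fin n)) (a : Fin n → ℝ≥0) : ℝ :=
  ∑ J ∈ I.powerset, (-1 : ℝ) ^ ((I \ J).card) * F (mask a J)

lemma vanish {I : Finset (Fin n)} {G : (Fin n → ℝ≥0) → ℝ} (hG : SepAdditiveOn I G)
    {a : Fin n → ℝ≥0} {i : Fin n} (hi : i ∈ I) (ha : a i = 0) : G a = 0 := by
  have h0 : Function.update a i 0 = a := by rw [← ha, Function.update_eq_self]
  have := hG.2 i hi a 0 0
  rw [add_zero, h0] at this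
  linarith

end SepAux

/-- A function `F : ℝ₊ⁿ → ℝ` is separately affine additive iff it decomposes as a sum,
over subsets `I ⊆ {1,…,n}`, of functions which depend only on the coordinates in `I`
and are separately additive in those; moreover the decomposition is unique. -/
theorem sepAffineAdditive_iff_sum_sepAdditive (n : ℕ) (F : (Fin n → ℝ≥0) → ℝ) :
    (SepAffineAdditive F ↔
      ∃ G : Finset (Fin n) → (Fin n → ℝ≥0) → ℝ,
        (∀ I : Finset (Fin n), SepAdditiveOn I (G I)) ∧
          ∀ a : Fin n → ℝ≥0, F a = ∑ I : Finset (Fin n), G I a) ∧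
    (∀ G G' : Finset (Fin n) → (Fin n → ℝ≥0) → ℝ,
      (∀ I : Finset (Fin n), SepAdditiveOn I (G I)) →
      (∀ I : Finset (Fin n), SepAdditiveOn I (G' I)) →
      (∀ a : Fin n → ℝ≥0, F a = ∑ I : Finset (Fin n), G I a) →
      (∀ a : Fin n → ℝ≥0, F a = ∑ I : Finset (Fin n), G' I a) →
      G = G') := by
  classical
  have key : ∀ (H : Finset (Fin n) → (Fin n → ℝ≥0) → ℝ),
      (∀ I : Finset (Fin n), SepAdditiveOn I (H I)) →
      (∀ a : Fin n → ℝ≥0, F a = ∑ I : Finset (Fin n), H I a) →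
      ∀ (I : Finset (Fin n)) (a : Fin n → ℝ≥0),
        H I a = ∑ J ∈ I.powerset, (-1 : ℝ) ^ ((I \ J).card) * F (SepAux.mask a J) := by
    intro H hH hsH I a
    have h : ∀ J : Finset (Fin n), F (SepAux.mask a J) = ∑ K ∈ J.powerset, H K a := by
      intro J
      rw [hsH (SepAux.mask a J)]
      have hv : ∀ K ∈ (Finset.univ : Finset (Finset (Fin n))), K ∉ J.powerset →
          H K (SepAux.mask a J) = 0 := by
        intro K _ hK
        obtain ⟨i, hiK, hiJ⟩ := Finset.not_subset.mp (fun h => hK (Finset.mem_powerset.mpr h))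
        exact SepAux.vanish (hH K) hiK (by simp [SepAux.mask, hiJ])
      rw [show (∑ K : Finset (Fin n), H K (SepAux.mask a J))
            = ∑ K ∈ Finset.univ, H K (SepAux.mask a J) from rfl,
        ← Finset.sum_subset (Finset.subset_univ J.powerset) hv]
      refine Finset.sum_congr rfl fun K hK => ?_
      exact (hH K).1 _ _ (fun i hi => by
        simp [SepAux.mask, Finset.mem_powerset.mp hK hi])
    exact SepAux.mobius (fun J => F (SepAux.mask a J)) (fun K => H K a) h I
  constructor
  · constructor
    · intro hF
      refine ⟨SepAux.gg F, fun I => ⟨?_, ?_⟩, ?_⟩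
      · -- depends only on coordinates in I
        intro a b hab
        unfold SepAux.gg
        refine Finset.sum_congr rfl fun J hJ => ?_
        rw [SepAux.mask_congr (fun i hi => hab i (Finset.mem_powerset.mp hJ hi))]
      · -- separately additive
        intro i hi a x y
        have hins : I = insert i (I.erase i) := (Finset.insert_erase hi).symm
        have hnm : i ∉ I.erase i := Finset.notMem_erase i I
        unfold SepAux.gg
        rw [hins]
        rw [Finset.sum_powerset_insert hnm, Finset.sum_powerset_insert hnm,
          Finset.sum_powerset_insert hnm]
        rw [← Finset.sum_add_distrib, ← Finset.sum_add_distrib, ← Finset.sum_add_distrib,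
          ← Finset.sum_add_distrib]
        refine Finset.sum_congr rfl fun J hJ => ?_
        have hJ' : J ⊆ I.erase i := Finset.mem_powerset.mp hJ
        have hiJ : i ∉ J := fun h => hnm (hJ' h)
        have h1 : (insert i (I.erase i)) \ J = insert i ((I.erase i) \ J) := by
          ext j
          simp only [Finset.mem_sdiff, Finset.mem_insert]
          constructor
          · rintro ⟨h | h, h2⟩
            · exact Or.inl h
            · exact Or.inr ⟨h, h2⟩
          · rintro (h | ⟨h, h2⟩)
            · exact ⟨Or.inl h, fun hc => hiJ (h ▸ hc)⟩
            · exact ⟨Or.inr h, h2⟩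
        have h2 : (insert i (I.erase i)) \ (insert i J) = (I.erase i) \ J := by
          ext j
          simp only [Finset.mem_sdiff, Finset.mem_insert]
          constructor
          · rintro ⟨h | h, h2⟩
            · exact absurd (Or.inl h) h2
            · exact ⟨h, fun hc => h2 (Or.inr hc)⟩
          · rintro ⟨h, h2⟩
            refine ⟨Or.inr h, ?_⟩
            rintro (rfl | hc)
            · exact hnm h
            · exact h2 hc
        have hni : i ∉ (I.erase i) \ J := fun h => hnm (Finset.mem_sdiff.mp h).1
        rw [SepAux.mask_update_notMem hiJ, SepAux.mask_update_notMem hiJ,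
          SepAux.mask_update_notMem hiJ,
          SepAux.mask_insert_update hiJ, SepAux.mask_insert_update hiJ,
          SepAux.mask_insert_update hiJ,
          hF i (SepAux.mask a J) x y, SepAux.mask_self_zero hiJ,
          h1, h2, Finset.card_insert_of_notMem hni, pow_succ]
        ring
      · -- the sum identity
        intro a
        unfold SepAux.gg
        rw [show (∑ I : Finset (Fin n),
              ∑ J ∈ I.powerset, (-1 : ℝ) ^ ((I \ J).card) * F (SepAux.mask a J))
            = ∑ I ∈ (Finset.univ : Finset (Fin n)).powerset,
              ∑ J ∈ I.powerset, (-1 : ℝ) ^ ((I \ J).card) * F (SepAux.mask a J) by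
          rw [Finset.powerset_univ]]
        rw [SepAux.double_sum]
        have h3 : ∀ J ∈ (Finset.univ : Finset (Fin n)).powerset,
            (∑ I ∈ (Finset.univ : Finset (Fin n)).powerset.filter (fun I => J ⊆ I),
              (-1 : ℝ) ^ ((I \ J).card) * F (SepAux.mask a J))
            = (if J = Finset.univ then 1 else 0) * F (SepAux.mask a J) := by
          intro J _
          rw [← Finset.sum_mul, SepAux.alt_sum2 Finset.univ J (Finset.subset_univ J)]
        rw [Finset.sum_congr rfl h3]
        simp [SepAux.mask_univ]
    · -- converse
      rintro ⟨G, hG, hsum⟩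
      intro i a x y
      rw [hsum, hsum, hsum, hsum, ← Finset.sum_add_distrib, ← Finset.sum_sub_distrib]
      refine Finset.sum_congr rfl fun I _ => ?_
      by_cases hi : i ∈ I
      · rw [(hG I).2 i hi a x y,
          SepAux.vanish (hG I) hi (show Function.update a i 0 i = 0 by simp)]
        ring
      · have hz : ∀ z : ℝ≥0, G I (Function.update a i z) = G I a := fun z =>
          (hG I).1 _ _ (fun j hj => Function.update_of_ne (fun e : j = i => hi (e ▸ hj)) _ _)
        rw [hz, hz, hz, hz]
        ring
  · -- uniqueness
    intro G G' hG hG' hs hs'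
    funext I a
    rw [key G hG hs I a, key G' hG' hs' I a]
end

section
/- If two families of separately additive functions {G_I} and {G'_I} indexed by subsets I ⊆ {1,…,n} (with G_∅, G'_∅ constants) satisfy Σ_I G_I((aᵢ)_{i∈I}) = Σ_I G'_I((aᵢ)_{i∈I}) for all a₁,…,aₙ ≥ 0, then G_I = G'_I for every I. -/
open scoped NNReal

/-- A separately additive function vanishes when a coordinate in `I` is zero. -/
lemma sepAdditiveOn_eq_zero {n : ℕ} {I : Finset (Fin n)} {G : (Fin n → ℝ≥0) → ℝ}
    (hG : SepAdditiveOn I G) {i : Fin n} (hi : i ∈ I) {a : Fin n → ℝ≥0} (ha : a i = 0) :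
    G a = 0 := by
  have h := hG.2 i hi a 0 0
  have hupd : Function.update a i 0 = a := by
    rw [← ha, Function.update_eq_self]
  rw [add_zero, hupd] at h
  linarith

/-- Subset inversion: if two functions have equal sums over every powerset, they are equal. -/
lemma powerset_sum_inj {n : ℕ} (g g' : Finset (Fin n) → ℝ)
    (h : ∀ S : Finset (Fin n), ∑ J ∈ S.powerset, g J = ∑ J ∈ S.powerset, g' J) :
    g = g' := by
  funext I
  induction I using Finset.strongInduction with
  | _ I ih =>
    have hmem : I ∈ I.powerset := Finset.mem_powerset_self I
    have h1 := Finset.add_sum_erase _ g hmem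
    have h2 := Finset.add_sum_erase _ g' hmem
    have hrest : ∑ J ∈ I.powerset.erase I, g J = ∑ J ∈ I.powerset.erase I, g' J := by
      refine Finset.sum_congr rfl fun J hJ => ?_
      rw [Finset.mem_erase, Finset.mem_powerset] at hJ
      exact ih J (lt_of_le_of_ne hJ.2 hJ.1)
    have := h I
    rw [← h1, ← h2, hrest] at this
    linarith

/-- Two families of separately additive functions indexed by the subsets of `{1,…,n}`
having the same total sum coincide. -/
theorem sum_sepAdditive_unique (n : ℕ) (G G' : Finset (Fin n) → (Fin n → ℝ≥0) → ℝ)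
    (hG : ∀ I : Finset (Fin n), SepAdditiveOn I (G I))
    (hG' : ∀ I : Finset (Fin n), SepAdditiveOn I (G' I))
    (hsum : ∀ a : Fin n → ℝ≥0, ∑ I : Finset (Fin n), G I a = ∑ I : Finset (Fin n), G' I a) :
    G = G' := by
  funext I a
  -- restrict `a` to `S`
  set r : Finset (Fin n) → Fin n → ℝ≥0 := fun S i => if i ∈ S then a i else 0 with hr
  have key : ∀ (H : Finset (Fin n) → (Fin n → ℝ≥0) → ℝ)
      (hH : ∀ I, SepAdditiveOn I (H I)) (S : Finset (Fin n)),
      ∑ J : Finset (Fin n), H J (r S) = ∑ J ∈ S.powerset, H J a := by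
    intro H hH S
    rw [← Finset.sum_subset (Finset.subset_univ S.powerset)]
    · refine Finset.sum_congr rfl fun J hJ => ?_
      rw [Finset.mem_powerset] at hJ
      refine (hH J).1 _ _ fun i hi => ?_
      simp [hr, hJ hi]
    · intro J _ hJ
      rw [Finset.mem_powerset] at hJ
      obtain ⟨i, hiJ, hiS⟩ := Finset.not_subset.mp hJ
      refine sepAdditiveOn_eq_zero (hH J) hiJ ?_
      simp [hr, hiS]
  have hps : ∀ S : Finset (Fin n),
      ∑ J ∈ S.powerset, G J a = ∑ J ∈ S.powerset, G' J a := by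
    intro S
    rw [← key G hG S, ← key G' hG' S]
    exact hsum (r S)
  have := powerset_sum_inj (fun J => G J a) (fun J => G' J a) hps
  exact congrFun this I
end

section
/- Let V be a translation invariant valuation on axis-parallel boxes in ℝⁿ such that sup{|V(K)| : K a box contained in the unit ball} < ∞. Then V is continuous with respect to the Hausdorff metric on boxes. -/
open Filter

/-!
Translation invariance gives `V [a, b] = f (b - a)` with `f t = V [0, t]`, and cutting a box by a
hyperplane `{p i = x}` shows that `f` is additive in each side length. Doubling one side at a time
spreads the bound near the origin to every box `[0, r]`, and then Cauchy's argument makes `f`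
affine in each side length, with slopes bounded on bounded sets: `f` is locally Lipschitz on the
orthant. Finally, Hausdorff convergence of boxes forces convergence of their corners.
-/

open Function Set Topology Metric

lemma eq_mul_of_add_of_abs_le {h : ℝ → ℝ} {M : ℝ}
    (hadd : ∀ x y, 0 ≤ x → 0 ≤ y → h (x + y) = h x + h y)
    (hbdd : ∀ x ∈ Icc (0 : ℝ) 1, |h x| ≤ M) {x : ℝ} (hx : 0 ≤ x) : h x = x * h 1 := by
  have hmul : ∀ k : ℕ, ∀ y, 0 ≤ y → h (k * y) = k * h y := by
    intro k y hy
    induction k with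
    | zero => simpa using hadd 0 0 le_rfl le_rfl
    | succ k ih =>
      rw [Nat.cast_succ, add_mul, one_mul, hadd _ _ (by positivity) hy, ih]
      ring
  -- Splitting `m * x` into integer and fractional part gives `m * (h x - x * h 1) = h r - r * h 1`.
  have hscaled : ∀ m : ℕ, m * |h x - x * h 1| ≤ M + |h 1| := by
    intro m
    set q := ⌊(m : ℝ) * x⌋₊
    set r := (m : ℝ) * x - q
    have hr : r ∈ Icc (0 : ℝ) 1 :=
      ⟨sub_nonneg.2 (Nat.floor_le (by positivity)),
        by linarith [Nat.lt_floor_add_one ((m : ℝ) * x)]⟩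
    have hsplit : (m : ℝ) * (h x - x * h 1) = h r - r * h 1 := by
      have := hadd (q * 1) r (by positivity) hr.1
      rw [show (q : ℝ) * 1 + r = m * x by ring, hmul m x hx, hmul q 1 zero_le_one] at this
      linear_combination this
    calc (m : ℝ) * |h x - x * h 1| = |h r - r * h 1| := by
          rw [← hsplit, abs_mul, Nat.abs_cast]
      _ ≤ |h r| + |r * h 1| := abs_sub _ _
      _ = |h r| + r * |h 1| := by rw [abs_mul, abs_of_nonneg hr.1]
      _ ≤ M + |h 1| := by
          gcongr
          · exact hbdd r hr
          · exact mul_le_of_le_one_left (abs_nonneg _) hr.2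
  by_contra hne
  have hpos : 0 < |h x - x * h 1| := abs_pos.2 (sub_ne_zero.2 hne)
  obtain ⟨m, hm⟩ := exists_nat_gt ((M + |h 1|) / |h x - x * h 1|)
  rw [div_lt_iff₀ hpos] at hm
  linarith [hscaled m]

variable {ι : Type*}

section Update

variable [DecidableEq ι]

lemma update_mem_Icc_zero {t r : ι → ℝ} {i : ι} {z : ℝ} (ht : 0 ≤ t)
    (htr : ∀ j ≠ i, t j ≤ r j) (hz : z ∈ Icc 0 (r i)) : update t i z ∈ Icc 0 r :=
  ⟨le_update_iff.2 ⟨hz.1, fun j _ => ht j⟩, update_le_iff.2 ⟨hz.2, htr⟩⟩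

lemma Icc_update_union_Icc_update {α : Type*} [LinearOrder α] {a b : ι → α} {i : ι} {s : α}
    (has : a i ≤ s) (hsb : s ≤ b i) : Icc a (update b i s) ∪ Icc (update a i s) b = Icc a b := by
  ext x
  simp only [mem_union, mem_Icc, le_update_iff, update_le_iff]
  constructor
  · rintro (⟨hax, hxs, hxb⟩ | ⟨⟨hsx, hax⟩, hxb⟩)
    · refine ⟨hax, fun j => ?_⟩
      rcases eq_or_ne j i with rfl | hj
      exacts [hxs.trans hsb, hxb j hj]
    · refine ⟨fun j => ?_, hxb⟩
      rcases eq_or_ne j i with rfl | hj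
      exacts [has.trans hsx, hax j hj]
  · rintro ⟨hax, hxb⟩
    rcases le_total (x i) s with h | h
    exacts [Or.inl ⟨hax, h, fun j _ => hxb j⟩, Or.inr ⟨⟨h, fun j _ => hax j⟩, hxb⟩]

lemma Icc_update_inter_Icc_update {α : Type*} [LinearOrder α] {a b : ι → α} {i : ι} {s : α}
    (has : a i ≤ s) (hsb : s ≤ b i) :
    Icc a (update b i s) ∩ Icc (update a i s) b = Icc (update a i s) (update b i s) := by
  rw [Icc_inter_Icc, sup_eq_right.2 (le_update_iff.2 ⟨has, fun _ _ => le_rfl⟩),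
    inf_eq_left.2 (update_le_iff.2 ⟨hsb, fun _ _ => le_rfl⟩)]

def CoordwiseAdditive (f : (ι → ℝ) → ℝ) : Prop :=
  ∀ t, 0 ≤ t → ∀ i (x y : ℝ), 0 ≤ x → 0 ≤ y →
    f (update t i (x + y)) + f (update t i 0) = f (update t i x) + f (update t i y)

namespace CoordwiseAdditive

variable {f : (ι → ℝ) → ℝ} {M : ℝ}

lemma abs_le_three_mul_of_le_update (hf : CoordwiseAdditive f) {r : ι → ℝ}
    (hM : ∀ t ∈ Icc 0 r, |f t| ≤ M) (i : ι) :
    ∀ t ∈ Icc 0 (update r i (2 * r i)), |f t| ≤ 3 * M := by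
  intro t ⟨ht0, htr⟩
  have hti0 : 0 ≤ t i := ht0 i
  have hti : t i ≤ 2 * r i := by simpa using htr i
  have htr' : ∀ j ≠ i, t j ≤ r j := fun j hj => by simpa [hj] using htr j
  have hbound : ∀ z ∈ Icc 0 (r i), |f (update t i z)| ≤ M :=
    fun z hz => hM _ (update_mem_Icc_zero ht0 htr' hz)
  set x := min (t i) (r i)
  have hx : x ∈ Icc 0 (r i) := ⟨le_min hti0 (by linarith), min_le_right _ _⟩
  have hy : t i - x ∈ Icc 0 (r i) :=
    ⟨sub_nonneg.2 (min_le_left _ _), by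
      rcases le_total (t i) (r i) with h | h <;> simp [x, h] <;> linarith⟩
  have hsplit := hf t ht0 i x (t i - x) hx.1 hy.1
  rw [add_sub_cancel, update_eq_self] at hsplit
  have h1 := abs_le.1 (hbound x hx)
  have h2 := abs_le.1 (hbound _ hy)
  have h3 := abs_le.1 (hbound 0 ⟨le_rfl, hx.1.trans hx.2⟩)
  exact abs_le.2 ⟨by linarith, by linarith⟩

variable {t : ι → ℝ}

lemma apply_update (hf : CoordwiseAdditive f) (hb : ∀ r, ∃ M, ∀ t ∈ Icc 0 r, |f t| ≤ M)
    (ht : 0 ≤ t) (i : ι) {x : ℝ} (hx : 0 ≤ x) :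
    f (update t i x) = f (update t i 0) + x * (f (update t i 1) - f (update t i 0)) := by
  obtain ⟨M, hM⟩ := hb (update t i 1)
  have hbound : ∀ y ∈ Icc (0 : ℝ) 1, |f (update t i y)| ≤ M := fun y hy =>
    hM _ (update_mem_Icc_zero ht (fun j hj => by simp [hj]) (by simpa using hy))
  have hlin := eq_mul_of_add_of_abs_le (h := fun y => f (update t i y) - f (update t i 0))
    (M := 2 * M) (fun x y hx hy => by linarith [hf t ht i x y hx hy]) (fun y hy => by
      linarith [abs_sub (f (update t i y)) (f (update t i 0)), hbound y hy,
        hbound 0 ⟨le_rfl, zero_le_one⟩]) hx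
  linarith

variable {R : ℝ}

lemma abs_sub_update_le (hf : CoordwiseAdditive f) (hb : ∀ r, ∃ M, ∀ t ∈ Icc 0 r, |f t| ≤ M)
    (hR : 1 ≤ R) (hM : ∀ t ∈ Icc 0 (fun _ => R), |f t| ≤ M) (ht : t ∈ Icc 0 (fun _ => R))
    (i : ι) {x : ℝ} (hx : 0 ≤ x) : |f t - f (update t i x)| ≤ 2 * M * |t i - x| := by
  have hbound : ∀ z ∈ Icc 0 R, |f (update t i z)| ≤ M := fun z hz =>
    hM _ (update_mem_Icc_zero ht.1 (fun j _ => ht.2 j) hz)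
  have hslope : |f (update t i 1) - f (update t i 0)| ≤ 2 * M := by
    linarith [abs_sub (f (update t i 1)) (f (update t i 0)), hbound 1 ⟨zero_le_one, hR⟩,
      hbound 0 ⟨le_rfl, by linarith⟩]
  have hdiff : f t - f (update t i x) = (t i - x) * (f (update t i 1) - f (update t i 0)) := by
    have hself := apply_update hf hb ht.1 i (ht.1 i)
    rw [update_eq_self] at hself
    rw [hself, apply_update hf hb ht.1 i hx]
    ring
  rw [hdiff, abs_mul, mul_comm]
  exact mul_le_mul_of_nonneg_right hslope (abs_nonneg _)

variable [Fintype ι]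

lemma abs_le_of_mem_Icc_two_smul (hf : CoordwiseAdditive f) {r : ι → ℝ}
    (hM : ∀ t ∈ Icc 0 r, |f t| ≤ M) :
    ∀ t ∈ Icc 0 ((2 : ℝ) • r), |f t| ≤ 3 ^ Fintype.card ι * M := by
  suffices ∀ s : Finset ι, ∀ t ∈ Icc 0 (s.piecewise ((2 : ℝ) • r) r), |f t| ≤ 3 ^ s.card * M by
    simpa using this Finset.univ
  intro s
  induction s using Finset.induction_on with
  | empty => simpa using hM
  | insert j s hj ih =>
    have hrj : ((2 : ℝ) • r) j = 2 * s.piecewise ((2 : ℝ) • r) r j := by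
      simp [Finset.piecewise_eq_of_notMem _ _ _ hj]
    rw [Finset.piecewise_insert, hrj, Finset.card_insert_of_notMem hj, pow_succ, mul_comm _ 3,
      mul_assoc]
    exact abs_le_three_mul_of_le_update hf ih j

lemma exists_abs_le (hf : CoordwiseAdditive f) {r : ι → ℝ} (hr : ∀ i, 0 < r i)
    (hM : ∃ M, ∀ t ∈ Icc 0 r, |f t| ≤ M) (r' : ι → ℝ) : ∃ M, ∀ t ∈ Icc 0 r', |f t| ≤ M := by
  have hdouble : ∀ k : ℕ, ∃ M, ∀ t ∈ Icc 0 ((2 : ℝ) ^ k • r), |f t| ≤ M := by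
    intro k
    induction k with
    | zero => simpa using hM
    | succ k ih =>
      obtain ⟨M, hM⟩ := ih
      exact ⟨_, by simpa [pow_succ', mul_smul] using abs_le_of_mem_Icc_two_smul hf hM⟩
  have hlarge : ∀ᶠ k : ℕ in atTop, ∀ i, r' i ≤ (2 : ℝ) ^ k * r i :=
    eventually_all.2 fun i => ((tendsto_pow_atTop_atTop_of_one_lt one_lt_two).atTop_mul_const
      (hr i)).eventually_ge_atTop (r' i)
  obtain ⟨k, hk⟩ := hlarge.exists
  obtain ⟨M, hM⟩ := hdouble k
  exact ⟨M, fun t ht => hM t (Icc_subset_Icc_right (fun i => by simpa using hk i) ht)⟩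

lemma abs_sub_le_sum (hf : CoordwiseAdditive f) (hb : ∀ r, ∃ M, ∀ t ∈ Icc 0 r, |f t| ≤ M)
    (hR : 1 ≤ R) (hM : ∀ t ∈ Icc 0 (fun _ => R), |f t| ≤ M) {s : ι → ℝ}
    (hs : s ∈ Icc 0 (fun _ => R)) (ht : t ∈ Icc 0 (fun _ => R)) :
    |f s - f t| ≤ 2 * M * ∑ i, |s i - t i| := by
  suffices ∀ D : Finset ι, ∀ s ∈ Icc 0 (fun _ => R), (∀ i ∉ D, s i = t i) →
      |f s - f t| ≤ 2 * M * ∑ i ∈ D, |s i - t i| from this _ s hs (by simp)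
  intro D
  induction D using Finset.induction_on with
  | empty =>
    intro s _ hst
    simp [funext fun i => hst i (Finset.notMem_empty i)]
  | insert j D hj ih =>
    intro s hs hst
    have hs' : update s j (t j) ∈ Icc 0 (fun _ => R) :=
      update_mem_Icc_zero hs.1 (fun i _ => hs.2 i) ⟨ht.1 j, ht.2 j⟩
    have hst' : ∀ i ∉ D, update s j (t j) i = t i := by
      intro i hi
      rcases eq_or_ne i j with rfl | hij
      · simp
      · rw [update_of_ne hij]; exact hst i (by simp [hij, hi])
    have hsum : ∑ i ∈ D, |update s j (t j) i - t i| = ∑ i ∈ D, |s i - t i| :=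
      Finset.sum_congr rfl fun i hi => by rw [update_of_ne (ne_of_mem_of_not_mem hi hj)]
    calc |f s - f t| ≤ |f s - f (update s j (t j))| + |f (update s j (t j)) - f t| :=
          abs_sub_le _ _ _
      _ ≤ 2 * M * |s j - t j| + 2 * M * ∑ i ∈ D, |s i - t i| := by
          gcongr
          · exact abs_sub_update_le hf hb hR hM hs j (ht.1 j)
          · exact hsum ▸ ih _ hs' hst'
      _ = 2 * M * ∑ i ∈ insert j D, |s i - t i| := by rw [Finset.sum_insert hj]; ring

lemma continuousOn (hf : CoordwiseAdditive f) (hb : ∀ r, ∃ M, ∀ t ∈ Icc 0 r, |f t| ≤ M) :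
    ContinuousOn f (Ici 0) := by
  intro t₀ ht₀
  set R := 1 + ∑ i, t₀ i
  have hR : 1 ≤ R := le_add_of_nonneg_right (Finset.sum_nonneg fun i _ => ht₀ i)
  have hlt : ∀ i, t₀ i < R := fun i =>
    lt_add_of_pos_of_le one_pos (Finset.single_le_sum (fun i _ => ht₀ i) (Finset.mem_univ i))
  obtain ⟨M, hM⟩ := hb fun _ => R
  have hnear : ContinuousWithinAt f (Icc 0 fun _ => R) t₀ := by
    have hmem : t₀ ∈ Icc 0 (fun _ => R) := ⟨ht₀, fun i => (hlt i).le⟩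
    have hbound : Tendsto (fun t => 2 * M * ∑ i, |t i - t₀ i|) (𝓝[Icc 0 fun _ => R] t₀) (𝓝 0) := by
      have : Continuous fun t : ι → ℝ => 2 * M * ∑ i, |t i - t₀ i| := by fun_prop
      simpa using this.continuousWithinAt.tendsto (x := t₀) (s := Icc 0 fun _ => R)
    refine tendsto_iff_dist_tendsto_zero.2
      (squeeze_zero' (Eventually.of_forall fun _ => dist_nonneg) ?_ hbound)
    filter_upwards [self_mem_nhdsWithin] with t ht
    exact (Real.dist_eq _ _).trans_le (abs_sub_le_sum hf hb hR hM ht hmem)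
  rw [← Ici_inter_Iic] at hnear
  exact (continuousWithinAt_inter (pi_Iic_mem_nhds hlt)).1 hnear

end CoordwiseAdditive

end Update

lemma sum_sq_le_one_of_mem_Icc [Fintype ι] {x : ι → ℝ}
    (hx : x ∈ Icc 0 fun _ => ((Fintype.card ι : ℝ) + 1)⁻¹) : ∑ i, x i ^ 2 ≤ 1 := by
  set δ := ((Fintype.card ι : ℝ) + 1)⁻¹
  have hδ : δ ≤ 1 := inv_le_one_of_one_le₀ (by simp)
  calc ∑ i, x i ^ 2 ≤ ∑ _i : ι, δ := Finset.sum_le_sum fun i _ => by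
        have h0 : 0 ≤ x i := hx.1 i
        have h1 : x i ≤ δ := hx.2 i
        nlinarith
    _ = Fintype.card ι * δ := by simp
    _ ≤ 1 := by
        rw [← div_eq_mul_inv, div_le_one (by positivity)]
        linarith

lemma sub_le_hausdorffDist_Icc [Fintype ι] {a b a' b' : ι → ℝ} (hab : a ≤ b) (hab' : a' ≤ b')
    (i : ι) : b i - b' i ≤ hausdorffDist (Icc a b) (Icc a' b') ∧
      a' i - a i ≤ hausdorffDist (Icc a b) (Icc a' b') := by
  have hfin : hausdorffEDist (Icc a b) (Icc a' b') ≠ ⊤ :=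
    hausdorffEDist_ne_top_of_nonempty_of_bounded (nonempty_Icc.2 hab) (nonempty_Icc.2 hab')
      isCompact_Icc.isBounded isCompact_Icc.isBounded
  have hcoord : ∀ x ∈ Icc a b, ∀ c : ℝ, (∀ y ∈ Icc a' b', c ≤ |x i - y i|) →
      c ≤ hausdorffDist (Icc a b) (Icc a' b') := fun x hx c hc =>
    ((le_infDist (nonempty_Icc.2 hab')).2 fun y hy =>
      ((hc y hy).trans_eq (Real.dist_eq _ _).symm).trans (dist_le_pi_dist x y i)).trans
      (infDist_le_hausdorffDist_of_mem hx hfin)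
  exact ⟨hcoord b ⟨hab, le_rfl⟩ _ fun y hy => (sub_le_sub_left (hy.2 i) _).trans (le_abs_self _),
    hcoord a ⟨le_rfl, hab⟩ _ fun y hy =>
      (sub_le_sub_right (hy.1 i) _).trans ((le_abs_self _).trans_eq (abs_sub_comm _ _))⟩

lemma dist_le_hausdorffDist_Icc [Fintype ι] {a b a' b' : ι → ℝ} (hab : a ≤ b) (hab' : a' ≤ b') :
    dist a a' ≤ hausdorffDist (Icc a b) (Icc a' b') ∧
      dist b b' ≤ hausdorffDist (Icc a b) (Icc a' b') := by
  simp only [dist_pi_le_iff hausdorffDist_nonneg, Real.dist_eq, abs_sub_le_iff]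
  have h := sub_le_hausdorffDist_Icc hab hab'
  have h' := sub_le_hausdorffDist_Icc hab' hab
  rw [hausdorffDist_comm] at h'
  exact ⟨fun i => ⟨(h' i).2, (h i).2⟩, fun i => ⟨(h i).1, (h' i).1⟩⟩

lemma tendsto_of_tendsto_hausdorffDist_Icc [Fintype ι] {a b : ℕ → ι → ℝ} {a₀ b₀ : ι → ℝ}
    (hab : ∀ j, a j ≤ b j) (hab₀ : a₀ ≤ b₀)
    (hH : Tendsto (fun j => hausdorffDist (Icc (a j) (b j)) (Icc a₀ b₀)) atTop (𝓝 0)) :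
    Tendsto a atTop (𝓝 a₀) ∧ Tendsto b atTop (𝓝 b₀) :=
  ⟨tendsto_iff_dist_tendsto_zero.2 (squeeze_zero (fun _ => dist_nonneg)
      (fun j => (dist_le_hausdorffDist_Icc (hab j) hab₀).1) hH),
    tendsto_iff_dist_tendsto_zero.2 (squeeze_zero (fun _ => dist_nonneg)
      (fun j => (dist_le_hausdorffDist_Icc (hab j) hab₀).2) hH)⟩

section Valuation

variable {n : ℕ} {V : Set (Fin n → ℝ) → ℝ}

lemma valuation_Icc_eq_Icc_zero_sub
    (htrans : ∀ (S : Set (Fin n → ℝ)) (x : Fin n → ℝ),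
      IsBox S → V ((fun p => p + x) '' S) = V S)
    {a b : Fin n → ℝ} (hab : a ≤ b) : V (Icc a b) = V (Icc 0 (b - a)) := by
  have himage : (fun p => p + a) '' Icc 0 (b - a) = Icc a b := by
    rw [image_add_const_Icc, zero_add, sub_add_cancel]
  rw [← himage, htrans _ a ⟨0, b - a, sub_nonneg.2 hab, rfl⟩]

lemma coordwiseAdditive_valuation_Icc_zero
    (hval : ∀ K L : Set (Fin n → ℝ), IsBox K → IsBox L → IsBox (K ∪ L) →
      V (K ∪ L) + V (K ∩ L) = V K + V L)
    (htrans : ∀ (S : Set (Fin n → ℝ)) (x : Fin n → ℝ),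
      IsBox S → V ((fun p => p + x) '' S) = V S) :
    CoordwiseAdditive fun t => V (Icc 0 t) := by
  intro t ht i x y hx hy
  -- Cut `[0, t[i ↦ x + y]]` by the hyperplane `{p i = x}` and translate the upper piece back.
  set b := update t i (x + y)
  have hxb : x ≤ b i := by simp [b]; linarith
  have hb : 0 ≤ b := le_update_iff.2 ⟨by positivity, fun j _ => ht j⟩
  have hlower : (0 : Fin n → ℝ) ≤ update b i x := le_update_iff.2 ⟨hx, fun j _ => hb j⟩
  have hupper : update (0 : Fin n → ℝ) i x ≤ b := update_le_iff.2 ⟨hxb, fun j _ => hb j⟩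
  have hcut : update (0 : Fin n → ℝ) i x ≤ update b i x :=
    update_le_update_iff.2 ⟨le_rfl, fun j _ => hb j⟩
  have hunion := Icc_update_union_Icc_update (a := (0 : Fin n → ℝ)) hx hxb
  have H := hval _ _ ⟨_, _, hlower, rfl⟩ ⟨_, _, hupper, rfl⟩ (hunion ▸ ⟨_, _, hb, rfl⟩)
  rw [hunion, Icc_update_inter_Icc_update (a := (0 : Fin n → ℝ)) hx hxb,
    valuation_Icc_eq_Icc_zero_sub htrans hupper, valuation_Icc_eq_Icc_zero_sub htrans hcut] at H
  simpa [b, ← update_sub] using H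

end Valuation

/-- A translation invariant valuation on axis-parallel boxes which is bounded on the
boxes contained in the Euclidean unit ball is continuous with respect to the
Hausdorff metric (stated via sequential continuity on boxes). -/
theorem bounded_valuation_on_boxes_continuous (n : ℕ) (V : Set (Fin n → ℝ) → ℝ)
    (hval : ∀ K L : Set (Fin n → ℝ), IsBox K → IsBox L → IsBox (K ∪ L) →
      V (K ∪ L) + V (K ∩ L) = V K + V L)
    (htrans : ∀ (S : Set (Fin n → ℝ)) (x : Fin n → ℝ),
      IsBox S → V ((fun p => p + x) '' S) = V S)
    (hbdd : ∃ M : ℝ, ∀ a b : Fin n → ℝ, a ≤ b →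
      (∀ x ∈ Set.Icc a b, ∑ i, (x i) ^ 2 ≤ 1) → |V (Set.Icc a b)| ≤ M) :
    ∀ (a b : ℕ → Fin n → ℝ) (a₀ b₀ : Fin n → ℝ),
      (∀ j, a j ≤ b j) → a₀ ≤ b₀ →
      Tendsto (fun j => Metric.hausdorffDist (Set.Icc (a j) (b j)) (Set.Icc a₀ b₀))
        atTop (nhds 0) →
      Tendsto (fun j => V (Set.Icc (a j) (b j))) atTop (nhds (V (Set.Icc a₀ b₀))) := by
  intro a b a₀ b₀ hab hab₀ hH
  obtain ⟨M, hM⟩ := hbdd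
  have hf := coordwiseAdditive_valuation_Icc_zero hval htrans
  have hsmall : ∀ t ∈ Icc 0 fun _ => ((Fintype.card (Fin n) : ℝ) + 1)⁻¹, |V (Icc 0 t)| ≤ M :=
    fun t ht => hM 0 t ht.1 fun x hx => sum_sq_le_one_of_mem_Icc (Icc_subset_Icc_right ht.2 hx)
  have hcont := hf.continuousOn (hf.exists_abs_le (fun _ => by positivity) ⟨M, hsmall⟩)
  obtain ⟨ha, hb⟩ := tendsto_of_tendsto_hausdorffDist_Icc hab hab₀ hH
  have hsides : Tendsto (fun j => b j - a j) atTop (𝓝[Ici 0] (b₀ - a₀)) :=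
    tendsto_nhdsWithin_iff.2 ⟨hb.sub ha, Eventually.of_forall fun j => sub_nonneg.2 (hab j)⟩
  rw [valuation_Icc_eq_Icc_zero_sub htrans hab₀]
  exact ((hcont _ (sub_nonneg.2 hab₀)).tendsto.comp hsides).congr fun j =>
    (valuation_Icc_eq_Icc_zero_sub htrans (hab j)).symm
end

section
/- Let V : 𝒦ⁿ → ℝ be a translation invariant valuation on convex bodies which is positively homogeneous of degree m with m ∉ {0,1,…,n}. Then V vanishes on every axis-parallel box (with respect to any fixed basis of ℝⁿ). -/
/-- A convex body in `ℝⁿ`: a nonempty compact convex set. -/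
def IsConvexBody {n : ℕ} (K : Set (Fin n → ℝ)) : Prop :=
  K.Nonempty ∧ IsCompact K ∧ Convex ℝ K

/-!
Write `f t` for the value of `V` on the box `[0, t]`. Cutting `[0, t]` in half across the
`i`-th coordinate gives two translates of `[0, t']` (with `t'ᵢ = tᵢ / 2`) meeting in a box
that is flat in direction `i`; so, once `V` is known to vanish on boxes of lower dimension,
the valuation property gives `f t = 2 f t'`. Halving every nondegenerate direction of a box
with `k` of them yields `f t = 2 ^ k f (t / 2)`, while homogeneity gives `f t = 2 ^ m f (t / 2)`.
As `m ≠ k`, both vanish; induction on `k` covers all axis-parallel boxes, and an arbitrary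
basis is reduced to the standard one by pulling `V` back along the coordinate isomorphism.
-/

open Function Set

section Valuation

variable {n : ℕ}

def IsValuation (V : Set (Fin n → ℝ) → ℝ) : Prop :=
  ∀ K L : Set (Fin n → ℝ), IsConvexBody K → IsConvexBody L →
    IsConvexBody (K ∪ L) → V (K ∪ L) + V (K ∩ L) = V K + V L

def IsTranslationInvariant (V : Set (Fin n → ℝ) → ℝ) : Prop :=
  ∀ (K : Set (Fin n → ℝ)) (x : Fin n → ℝ), IsConvexBody K → V ((fun p => p + x) '' K) = V K

def IsHomogeneous (V : Set (Fin n → ℝ) → ℝ) (m : ℝ) : Prop :=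
  ∀ l : ℝ, 0 < l → ∀ K : Set (Fin n → ℝ), IsConvexBody K →
    V ((fun p => l • p) '' K) = l ^ m * V K

theorem IsConvexBody.image {K : Set (Fin n → ℝ)} (hK : IsConvexBody K)
    (E : (Fin n → ℝ) →ₗ[ℝ] (Fin n → ℝ)) : IsConvexBody (E '' K) :=
  ⟨hK.1.image E, hK.2.1.image E.continuous_of_finiteDimensional, hK.2.2.linear_image E⟩

theorem isConvexBody_Icc {a b : Fin n → ℝ} (hab : a ≤ b) : IsConvexBody (Icc a b) :=
  ⟨nonempty_Icc.2 hab, isCompact_Icc, convex_Icc a b⟩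

variable {V : Set (Fin n → ℝ) → ℝ} {m : ℝ} (E : (Fin n → ℝ) →ₗ[ℝ] (Fin n → ℝ))

theorem IsValuation.comp_image (hV : IsValuation V) (hE : Injective E) :
    IsValuation fun K => V (E '' K) := by
  intro K L hK hL hKL
  dsimp only
  rw [image_union, image_inter hE]
  exact hV _ _ (hK.image E) (hL.image E) (image_union E K L ▸ hKL.image E)

theorem IsTranslationInvariant.comp_image (hV : IsTranslationInvariant V) :
    IsTranslationInvariant fun K => V (E '' K) := by
  intro K x hK
  have hcomm : E '' ((· + x) '' K) = (· + E x) '' (E '' K) := by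
    simp only [image_image, map_add]
  simp only [hcomm, hV _ _ (hK.image E)]

theorem IsHomogeneous.comp_image (hV : IsHomogeneous V m) :
    IsHomogeneous (fun K => V (E '' K)) m := by
  intro l hl K hK
  have hcomm : E '' ((l • ·) '' K) = (l • ·) '' (E '' K) := by
    simp only [image_image, map_smul]
  simp only [hcomm, hV l hl _ (hK.image E)]

end Valuation

section Boxes

variable {ι α : Type*} [DecidableEq ι] [LinearOrder α] {a b : ι → α} {i : ι} {s : α}

theorem Icc_union_Icc_update (has : a i ≤ s) (hsb : s ≤ b i) :
    Icc a (update b i s) ∪ Icc (update a i s) b = Icc a b := by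
  ext x
  simp only [mem_union, mem_Icc, le_update_iff, update_le_iff]
  constructor
  · rintro (⟨hax, hxi, hxb⟩ | ⟨⟨hxi, hax⟩, hxb⟩)
    · exact ⟨hax, fun j => by rcases eq_or_ne j i with rfl | hj; exacts [hxi.trans hsb, hxb j hj]⟩
    · exact ⟨fun j => by rcases eq_or_ne j i with rfl | hj; exacts [has.trans hxi, hax j hj], hxb⟩
  · rintro ⟨hax, hxb⟩
    rcases le_total (x i) s with hxi | hxi
    exacts [.inl ⟨hax, hxi, fun j _ => hxb j⟩, .inr ⟨⟨hxi, fun j _ => hax j⟩, hxb⟩]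

theorem Icc_inter_Icc_update (has : a i ≤ s) (hsb : s ≤ b i) :
    Icc a (update b i s) ∩ Icc (update a i s) b = Icc (update a i s) (update b i s) := by
  rw [Icc_inter_Icc, sup_of_le_right (le_update_self_iff.2 has),
    inf_of_le_left (update_le_self_iff.2 hsb)]

end Boxes

section BoxValues

variable {n : ℕ} {V : Set (Fin n → ℝ) → ℝ} {m : ℝ}

theorem IsTranslationInvariant.apply_Icc (hV : IsTranslationInvariant V) {a b : Fin n → ℝ}
    (hab : a ≤ b) : V (Icc a b) = V (Icc 0 (b - a)) := by
  have hshift : Icc a b = (· + a) '' Icc 0 (b - a) := by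
    rw [image_add_const_Icc, zero_add, sub_add_cancel]
  rw [hshift, hV _ _ (isConvexBody_Icc (sub_nonneg.2 hab))]

theorem IsHomogeneous.apply_Icc_smul (hV : IsHomogeneous V m) {t : Fin n → ℝ} (ht : 0 ≤ t)
    {l : ℝ} (hl : 0 < l) : V (Icc 0 (l • t)) = l ^ m * V (Icc 0 t) := by
  have hscale : (fun p => l • p) '' Icc 0 t = Icc 0 (l • t) := by
    simpa using (OrderIso.smulRight (β := Fin n → ℝ) hl).image_Icc 0 t
  rw [← hscale, hV l hl _ (isConvexBody_Icc ht)]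

theorem IsValuation.apply_Icc_add_apply_Icc_update_zero (hV : IsValuation V)
    (htr : IsTranslationInvariant V) {t : Fin n → ℝ} (ht : 0 ≤ t) (i : Fin n) {s : ℝ}
    (hs : 0 ≤ s) (hst : s ≤ t i) :
    V (Icc 0 t) + V (Icc 0 (update t i 0)) =
      V (Icc 0 (update t i s)) + V (Icc 0 (update t i (t i - s))) := by
  have hct : update (0 : Fin n → ℝ) i s ≤ t := update_le_iff.2 ⟨hst, fun j _ => ht j⟩
  have hunion := Icc_union_Icc_update (a := 0) hs hst
  have hcut := hV (Icc 0 (update t i s)) (Icc (update 0 i s) t)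
    (isConvexBody_Icc (le_update_iff.2 ⟨hs, fun j _ => ht j⟩)) (isConvexBody_Icc hct)
    (hunion ▸ isConvexBody_Icc ht)
  rw [hunion, Icc_inter_Icc_update (a := 0) hs hst, htr.apply_Icc hct,
    htr.apply_Icc (update_le_update_iff.2 ⟨le_rfl, fun j _ => ht j⟩)] at hcut
  have hfar : t - update (0 : Fin n → ℝ) i s = update t i (t i - s) := by
    funext j; rcases eq_or_ne j i with rfl | hj <;> simp [*]
  have hflat : update t i s - update (0 : Fin n → ℝ) i s = update t i 0 := by
    funext j; rcases eq_or_ne j i with rfl | hj <;> simp [*]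
  rw [hfar, hflat] at hcut
  linarith

end BoxValues

section Halving

variable {ι : Type*} [DecidableEq ι] {f : (ι → ℝ) → ℝ}

theorem eq_two_pow_card_mul_half_of_halving
    (hhalf : ∀ t : ι → ℝ, 0 ≤ t → ∀ i, f t + f (update t i 0) = 2 * f (update t i (t i / 2)))
    {S : Finset ι}
    (hflat : ∀ t : ι → ℝ, 0 ≤ t → (∀ j ∉ S, t j = 0) → ∀ i ∈ S, f (update t i 0) = 0)
    {t : ι → ℝ} (ht : 0 ≤ t) (htS : ∀ j ∉ S, t j = 0) :
    f t = 2 ^ S.card * f (fun j => t j / 2) := by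
  have hpartial : ∀ T ⊆ S, f t = 2 ^ T.card * f (T.piecewise (fun j => t j / 2) t) := by
    intro T
    induction T using Finset.induction_on with
    | empty => simp
    | insert i T hi ih =>
      intro hTS
      set t' := T.piecewise (fun j => t j / 2) t
      have ht' : 0 ≤ t' := T.le_piecewise_of_le_of_le (fun j => div_nonneg (ht j) zero_le_two) ht
      have ht'S : ∀ j ∉ S, t' j = 0 := fun j hj => by
        simp only [t', Finset.piecewise, htS j hj, zero_div, ite_self]
      have hnext : (insert i T).piecewise (fun j => t j / 2) t = update t' i (t' i / 2) := by
        rw [Finset.piecewise_insert, show t' i = t i from T.piecewise_eq_of_notMem _ _ hi]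
      have hstep := hhalf t' ht' i
      rw [hflat t' ht' ht'S i (hTS (Finset.mem_insert_self i T)), add_zero] at hstep
      rw [ih ((Finset.subset_insert i T).trans hTS), Finset.card_insert_of_notMem hi, pow_succ,
        hnext, mul_assoc, ← hstep]
  have hhalved : S.piecewise (fun j => t j / 2) t = fun j => t j / 2 := by
    funext j
    by_cases hj : j ∈ S
    · simp [hj]
    · simp [hj, htS j hj]
  simpa [hhalved] using hpartial S subset_rfl

theorem eq_zero_of_halving_of_homogeneous [Fintype ι] {m : ℝ}
    (hhalf : ∀ t : ι → ℝ, 0 ≤ t → ∀ i, f t + f (update t i 0) = 2 * f (update t i (t i / 2)))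
    (hhom : ∀ t : ι → ℝ, 0 ≤ t → f ((2 : ℝ) • t) = 2 ^ m * f t)
    (hm : ∀ k : ℕ, k ≤ Fintype.card ι → m ≠ k) {t : ι → ℝ} (ht : 0 ≤ t) : f t = 0 := by
  suffices h : ∀ S : Finset ι, ∀ t : ι → ℝ, 0 ≤ t → (∀ j ∉ S, t j = 0) → f t = 0 from
    h Finset.univ t ht (by simp)
  intro S
  induction S using Finset.strongInduction with
  | H S ih =>
    intro t ht htS
    have hflat : ∀ s : ι → ℝ, 0 ≤ s → (∀ j ∉ S, s j = 0) → ∀ i ∈ S, f (update s i 0) = 0 :=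
      fun s hs hsS i hi => ih (S.erase i) (Finset.erase_ssubset hi) _
        (le_update_iff.2 ⟨le_rfl, fun j _ => hs j⟩) fun j hj => by
          rcases eq_or_ne j i with rfl | hji
          · exact update_self ..
          · rw [update_of_ne hji]
            exact hsS j fun hjS => hj (Finset.mem_erase.2 ⟨hji, hjS⟩)
    have hhalf_nonneg : 0 ≤ fun j => t j / 2 := fun j => div_nonneg (ht j) zero_le_two
    have hcount := eq_two_pow_card_mul_half_of_halving hhalf hflat ht htS
    have hscale : f t = 2 ^ m * f (fun j => t j / 2) := by
      rw [← hhom _ hhalf_nonneg]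
      congr 1
      funext j
      simp only [Pi.smul_apply]
      ring
    have hne : (2 : ℝ) ^ m ≠ 2 ^ S.card := by
      rw [← Real.rpow_natCast, Ne, Real.rpow_right_inj two_pos (by norm_num)]
      exact hm _ S.card_le_univ
    have hzero : f (fun j => t j / 2) = 0 := by
      have : ((2 : ℝ) ^ m - 2 ^ S.card) * f (fun j => t j / 2) = 0 := by
        rw [sub_mul]
        linarith
      exact (mul_eq_zero.1 this).resolve_left (sub_ne_zero.2 hne)
    rw [hcount, hzero, mul_zero]

end Halving

theorem IsValuation.apply_Icc_eq_zero {n : ℕ} {V : Set (Fin n → ℝ) → ℝ} {m : ℝ}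
    (hV : IsValuation V) (htr : IsTranslationInvariant V) (hhom : IsHomogeneous V m)
    (hm : ∀ k : ℕ, k ≤ n → m ≠ k) {a b : Fin n → ℝ} (hab : a ≤ b) : V (Icc a b) = 0 := by
  rw [htr.apply_Icc hab]
  refine eq_zero_of_halving_of_homogeneous (f := fun t => V (Icc 0 t)) (fun t ht i => ?_)
    (fun t ht => hhom.apply_Icc_smul ht two_pos) (by simpa using hm) (sub_nonneg.2 hab)
  have hcut := hV.apply_Icc_add_apply_Icc_update_zero htr ht i (s := t i / 2)
    (div_nonneg (ht i) zero_le_two) (half_le_self (ht i))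
  rwa [sub_half, ← two_mul] at hcut

/-- A translation invariant valuation on convex bodies in `ℝⁿ` which is positively
homogeneous of degree `m ∉ {0,1,…,n}` vanishes on every parallelotope with respect
to any basis of `ℝⁿ`. -/
theorem valuation_homogeneous_notNat_vanishes_on_boxes (n : ℕ)
    (V : Set (Fin n → ℝ) → ℝ)
    (hval : ∀ K L : Set (Fin n → ℝ), IsConvexBody K → IsConvexBody L →
      IsConvexBody (K ∪ L) → V (K ∪ L) + V (K ∩ L) = V K + V L)
    (htrans : ∀ (K : Set (Fin n → ℝ)) (x : Fin n → ℝ),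
      IsConvexBody K → V ((fun p => p + x) '' K) = V K)
    (m : ℝ)
    (hhom : ∀ l : ℝ, 0 < l → ∀ K : Set (Fin n → ℝ), IsConvexBody K →
      V ((fun p => l • p) '' K) = l ^ m * V K)
    (hm : ∀ k : ℕ, k ≤ n → m ≠ (k : ℝ)) :
    ∀ (e : Module.Basis (Fin n) ℝ (Fin n → ℝ)) (a b : Fin n → ℝ), a ≤ b →
      V ((fun c : Fin n → ℝ => ∑ i, c i • e i) '' Set.Icc a b) = 0 := by
  intro e a b hab
  let E : (Fin n → ℝ) →ₗ[ℝ] (Fin n → ℝ) := e.equivFun.symm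
  have hE : (fun c : Fin n → ℝ => ∑ i, c i • e i) = E :=
    funext fun c => (e.equivFun_symm_apply c).symm
  rw [hE]
  exact IsValuation.apply_Icc_eq_zero (V := fun K => V (E '' K))
    (IsValuation.comp_image E hval e.equivFun.symm.injective)
    (IsTranslationInvariant.comp_image E htrans) (IsHomogeneous.comp_image E hhom) hm hab
end

section
/- For any two functions f, g : ℝ → ℝ, the map V on compact intervals of ℝ defined by V([a,b]) = f(a) + g(b) (for a ≤ b) is a valuation: whenever [a,b] ∩ [a',b'] ≠ ∅, V([a,b] ∪ [a',b']) + V([a,b] ∩ [a',b']) = V([a,b]) + V([a',b']). Conversely, every valuation V on compact intervals admits such a representation V([a,b]) = f(a) + g(b). -/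
/-!
Gluing `[u, v]` and `[v, w]` along `{v}` gives `V [u, w] = V [u, v] + V [v, w] - V {v}`.
Fix a base point `c`. If `c ∈ [a, b]`, splitting `[a, b]` at `c` writes `V [a, b]` as a term
depending only on `a` plus one depending only on `b`; if `c ∉ [a, b]`, splitting the interval
from `c` to the far endpoint at the near one does the same, and `min`/`max` with `c` merge
the cases into one formula. Conversely `[a, b] ↦ f a + g b` is a valuation because the union
and intersection of overlapping `[a, b]`, `[a', b']` have left endpoints `min a a'`, `max a a'`
and right endpoints `max b b'`, `min b b'`.
-/

open Set

variable {α M : Type*} [LinearOrder α]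

def IsIntervalValuation [Add M] (V : Set α → M) : Prop :=
  ∀ a b a' b' : α, a ≤ b → a' ≤ b' → (Icc a b ∩ Icc a' b').Nonempty →
    V (Icc a b ∪ Icc a' b') + V (Icc a b ∩ Icc a' b') = V (Icc a b) + V (Icc a' b')

theorem apply_min_add_apply_max [AddCommMagma M] (f : α → M) (x y : α) :
    f (min x y) + f (max x y) = f x + f y := by
  rcases le_total x y with h | h
  · rw [min_eq_left h, max_eq_right h]
  · rw [min_eq_right h, max_eq_left h, add_comm]

theorem isIntervalValuation_of_endpoint_repr [AddCommMonoid M] {f g : α → M} {V : Set α → M}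
    (hV : ∀ a b : α, a ≤ b → V (Icc a b) = f a + g b) : IsIntervalValuation V := by
  rintro a b a' b' hab ha'b' ⟨x, ⟨hax, hxb⟩, ⟨ha'x, hxb'⟩⟩
  rw [Icc_union_Icc' (ha'x.trans hxb) (hax.trans hxb'), Icc_inter_Icc,
    hV _ _ ((min_le_left a a').trans (hab.trans (le_max_left b b'))),
    hV _ _ ((max_le hax ha'x).trans (le_min hxb hxb')), hV _ _ hab, hV _ _ ha'b']
  calc f (min a a') + g (max b b') + (f (max a a') + g (min b b'))
      = (f (min a a') + f (max a a')) + (g (min b b') + g (max b b')) := by abel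
    _ = f a + g b + (f a' + g b') := by
      rw [apply_min_add_apply_max, apply_min_add_apply_max]; abel

namespace IsIntervalValuation

variable [AddCommGroup M] {V : Set α → M}

theorem apply_Icc_eq_of_le_of_le (hV : IsIntervalValuation V) {u v w : α} (huv : u ≤ v)
    (hvw : v ≤ w) : V (Icc u w) = V (Icc u v) + V (Icc v w) - V (Icc v v) := by
  have h := hV u v v w huv hvw ⟨v, ⟨huv, le_rfl⟩, ⟨le_rfl, hvw⟩⟩
  rw [Icc_union_Icc_eq_Icc huv hvw, Icc_inter_Icc, max_eq_right huv, min_eq_left hvw] at h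
  rw [← h, add_sub_cancel_right]

theorem exists_endpoint_repr (hV : IsIntervalValuation V) (c : α) :
    ∃ f g : α → M, ∀ a b : α, a ≤ b → V (Icc a b) = f a + g b := by
  refine ⟨fun a => V (Icc a (max a c)) - V (Icc c (max a c)),
    fun b => V (Icc (min b c) b) - V (Icc (min b c) c) + V (Icc c c), fun a b hab => ?_⟩
  beta_reduce
  rcases le_or_gt a c with hac | hca
  · rcases le_or_gt c b with hcb | hbc
    · rw [max_eq_right hac, min_eq_right hcb, hV.apply_Icc_eq_of_le_of_le hac hcb]
      abel
    · rw [max_eq_right hac, min_eq_left hbc.le, hV.apply_Icc_eq_of_le_of_le hab hbc.le]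
      abel
  · rw [max_eq_left hca.le, min_eq_right (hca.le.trans hab),
      hV.apply_Icc_eq_of_le_of_le hca.le hab]
    abel

end IsIntervalValuation

/-- Valuations on compact intervals of `ℝ` are exactly the maps of the form
`[a,b] ↦ f(a) + g(b)`: such maps are valuations, and conversely every valuation on
compact intervals admits such a representation. -/
theorem valuation_on_intervals_iff_endpoint_repr :
    (∀ (f g : ℝ → ℝ) (V : Set ℝ → ℝ),
      (∀ a b : ℝ, a ≤ b → V (Set.Icc a b) = f a + g b) →
      ∀ a b a' b' : ℝ, a ≤ b → a' ≤ b' → (Set.Icc a b ∩ Set.Icc a' b').Nonempty →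
        V (Set.Icc a b ∪ Set.Icc a' b') + V (Set.Icc a b ∩ Set.Icc a' b') =
          V (Set.Icc a b) + V (Set.Icc a' b')) ∧
    (∀ V : Set ℝ → ℝ,
      (∀ a b a' b' : ℝ, a ≤ b → a' ≤ b' → (Set.Icc a b ∩ Set.Icc a' b').Nonempty →
        V (Set.Icc a b ∪ Set.Icc a' b') + V (Set.Icc a b ∩ Set.Icc a' b') =
          V (Set.Icc a b) + V (Set.Icc a' b')) →
      ∃ f g : ℝ → ℝ, ∀ a b : ℝ, a ≤ b → V (Set.Icc a b) = f a + g b) :=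
  ⟨fun _ _ _ hV => isIntervalValuation_of_endpoint_repr hV,
    fun _ hV => IsIntervalValuation.exists_endpoint_repr hV 0⟩
end
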